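/- arXiv:2205.03317 — 4 statements merged into one kernel-verified Lean document; each statement's English description precedes it below -/
import Mathlib

section
/- Let c_{l,v} be the coefficients in the representation μ_v(λ) = v! Σ_{l=1}^{⌊v/2⌋} c_{l,v} λ^l of the central moments of the Poisson distribution, with the convention c_{0,v−1} = 0. Then for every integer v ≥ 2: if v is even, (v+1)c_{l,v+1} = l·c_{l,v} + c_{l−1,v−1} for l = 1,2,…,⌊(v+1)/2⌋; if v is odd, the same identity holds for l = 1,2,…,⌊(v+1)/2⌋−1, and (v+1)·c_{⌊(v+1)/2⌋,v+1} = c_{⌊(v−1)/2⌋,v−1}. -/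
noncomputable section

/-- The Poisson pmf with parameter `lam`, evaluated at `k`. -/
def pois (lam : ℝ) (k : ℕ) : ℝ := Real.exp (-lam) * lam ^ k / (Nat.factorial k : ℝ)

/-- The `v`-th central moment `μ_v(λ) = E (ξ − λ)^v` of a Poisson(`lam`) random variable. -/
def poisCentralMoment (lam : ℝ) (v : ℕ) : ℝ :=
  ∑' k : ℕ, pois lam k * ((k : ℝ) - lam) ^ v

/-- The coefficient `c_{l,v} = Σ ∏_{m=2}^{v} 1/(s_m! (m!)^{s_m})`, the sum over all
nonnegative integers `s_2, …, s_v` with `2 s_2 + ⋯ + v s_v = v` and `s_2 + ⋯ + s_v = l`;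
these are the coefficients in `μ_v(λ) = v! Σ_{l=1}^{⌊v/2⌋} c_{l,v} λ^l`.  Note that this
definition automatically yields `c_{0,w} = 0` for `w ≥ 1`, which is the convention
`c_{0,v−1} = 0` used below. -/
def cCoeff (l v : ℕ) : ℝ :=
  ∑ s ∈ (Finset.Icc 2 v).pi (fun _ => Finset.range (v + 1)),
    if (∑ m ∈ (Finset.Icc 2 v).attach, m.1 * s m.1 m.2) = v ∧
       (∑ m ∈ (Finset.Icc 2 v).attach, s m.1 m.2) = l then
      ∏ m ∈ (Finset.Icc 2 v).attach,
        (1 : ℝ) / ((Nat.factorial (s m.1 m.2) : ℝ) * (Nat.factorial m.1 : ℝ) ^ (s m.1 m.2))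
    else 0

open Finset
/-! ### Auxiliary infrastructure -/

@[to_additive split2']
theorem split2 {N : ℕ} {M : Type*} [CommMonoid M] {i j : Fin N} (hij : i ≠ j)
    (F : Fin N → M) :
    ∏ k, F k = F i * (F j * ∏ k ∈ (univ.erase i).erase j, F k) := by
  rw [← Finset.mul_prod_erase univ F (mem_univ i),
      ← Finset.mul_prod_erase (univ.erase i) F (Finset.mem_erase.2 ⟨hij.symm, mem_univ j⟩)]

@[to_additive split1']
theorem split1 {N : ℕ} {M : Type*} [CommMonoid M] (i : Fin N) (F : Fin N → M) :
    ∏ k, F k = F i * ∏ k ∈ univ.erase i, F k :=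
  (Finset.mul_prod_erase univ F (mem_univ i)).symm

@[to_additive]
theorem prod_update2 {N : ℕ} {M : Type*} [CommMonoid M] {i j : Fin N} (hij : i ≠ j)
    (K : Fin N → ℕ → M) (f : Fin N → ℕ) (a b : ℕ) :
    ∏ k, K k (Function.update (Function.update f i a) j b k)
      = K i a * (K j b * ∏ k ∈ (univ.erase i).erase j, K k (f k)) := by
  rw [split2 hij]
  have h1 : Function.update (Function.update f i a) j b i = a := by
    rw [Function.update_of_ne hij, Function.update_self]
  have h2 : Function.update (Function.update f i a) j b j = b := Function.update_self _ _ _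
  rw [h1, h2]
  congr 1
  congr 1
  apply Finset.prod_congr rfl
  intro x hx
  obtain ⟨hxj, hx'⟩ := Finset.mem_erase.1 hx
  obtain ⟨hxi, -⟩ := Finset.mem_erase.1 hx'
  rw [Function.update_of_ne hxj, Function.update_of_ne hxi]

@[to_additive]
theorem prod_update1 {N : ℕ} {M : Type*} [CommMonoid M] (i : Fin N)
    (K : Fin N → ℕ → M) (f : Fin N → ℕ) (a : ℕ) :
    ∏ k, K k (Function.update f i a k)
      = K i a * ∏ k ∈ univ.erase i, K k (f k) := by
  rw [split1 i]
  rw [Function.update_self]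
  congr 1
  apply Finset.prod_congr rfl
  intro x hx
  rw [Function.update_of_ne (Finset.mem_erase.1 hx).1]

theorem scalar_key (mm0 a0 b : ℕ) :
    ((((mm0+1)*(a0+1) : ℕ)) : ℝ) *
      (1/((Nat.factorial (a0+1) : ℝ) * ((Nat.factorial (mm0+1) : ℝ))^(a0+1)) *
       (1/((Nat.factorial b : ℝ) * ((Nat.factorial mm0 : ℝ))^b)))
    = (((b+1 : ℕ)) : ℝ) *
      (1/((Nat.factorial a0 : ℝ) * ((Nat.factorial (mm0+1) : ℝ))^a0) *
       (1/((Nat.factorial (b+1) : ℝ) * ((Nat.factorial mm0 : ℝ))^(b+1)))) := by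
  have h1 : (Nat.factorial a0 : ℝ) ≠ 0 := Nat.cast_ne_zero.2 (Nat.factorial_ne_zero _)
  have h2 : (Nat.factorial b : ℝ) ≠ 0 := Nat.cast_ne_zero.2 (Nat.factorial_ne_zero _)
  have h3 : (Nat.factorial mm0 : ℝ) ≠ 0 := Nat.cast_ne_zero.2 (Nat.factorial_ne_zero _)
  have h4 : (Nat.factorial (mm0+1) : ℝ) ≠ 0 := Nat.cast_ne_zero.2 (Nat.factorial_ne_zero _)
  rw [Nat.factorial_succ (a0), Nat.factorial_succ b, Nat.factorial_succ mm0, pow_succ, pow_succ]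
  push_cast
  field_simp

theorem scalar_key2 (a0 : ℕ) :
    (((2*(a0+1) : ℕ)) : ℝ) *
      (1/((Nat.factorial (a0+1) : ℝ) * ((Nat.factorial 2 : ℝ))^(a0+1)))
    = 1/((Nat.factorial a0 : ℝ) * ((Nat.factorial 2 : ℝ))^a0) := by
  have h1 : (Nat.factorial a0 : ℝ) ≠ 0 := Nat.cast_ne_zero.2 (Nat.factorial_ne_zero _)
  rw [Nat.factorial_succ a0, pow_succ]
  have : (Nat.factorial 2 : ℝ) = 2 := by norm_num [Nat.factorial]
  rw [this]
  push_cast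
  field_simp

/-! ### The `Fin`-indexed reformulation of `cCoeff` -/

def AA (V l v : ℕ) : Finset (Fin (V+2) → ℕ) :=
  (Fintype.piFinset fun _ : Fin (V+2) => Finset.range (V+2)).filter
    (fun f => (∑ m, m.1 * f m) = v ∧ (∑ m, f m) = l ∧ f 0 = 0 ∧ f 1 = 0)

def ww (V : ℕ) (f : Fin (V+2) → ℕ) : ℝ :=
  ∏ m, 1 / ((Nat.factorial (f m) : ℝ) * (Nat.factorial m.1 : ℝ) ^ (f m))

def cAux (l v V : ℕ) : ℝ := ∑ f ∈ AA V l v, ww V f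

def extFun (v V : ℕ) (s : (a : ℕ) → a ∈ Finset.Icc 2 v → ℕ) (m : Fin (V+2)) : ℕ :=
  if h : m.1 ∈ Finset.Icc 2 v then s m.1 h else 0

@[to_additive]
theorem glue_prod {M : Type*} [CommMonoid M] {v V : ℕ} (hvV : v ≤ V)
    (s : (a : ℕ) → a ∈ Finset.Icc 2 v → ℕ) (G : ℕ → ℕ → M) (hG : ∀ m, G m 0 = 1) :
    ∏ m : Fin (V+2), G m.1 (extFun v V s m) = ∏ m ∈ (Finset.Icc 2 v).attach, G m.1 (s m.1 m.2) := by
  rw [← Finset.prod_filter_of_ne (s := univ) (p := fun m : Fin (V+2) => m.1 ∈ Finset.Icc 2 v)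
    (f := fun m => G m.1 (extFun v V s m))
    (by intro m _ hne; by_contra hmem; exact hne (by simp [extFun, hmem, hG]))]
  refine Finset.prod_bij' (fun m hm => ⟨m.1, (Finset.mem_filter.1 hm).2⟩)
    (fun a _ => ⟨a.1, by have := a.2; simp only [Finset.mem_Icc] at this; omega⟩) ?_ ?_ ?_ ?_ ?_
  · intro m hm; exact Finset.mem_attach _ _
  · intro a _
    refine Finset.mem_filter.2 ⟨Finset.mem_univ _, a.2⟩
  · intro m hm; exact Fin.ext rfl
  · intro a _; exact Subtype.ext rfl
  · intro m hm
    have h2 := (Finset.mem_filter.1 hm).2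
    simp [extFun, h2]

theorem fzero_of_big {V l v : ℕ} {f : Fin (V+2) → ℕ} (hf : f ∈ AA V l v)
    {m : Fin (V+2)} (hm : v < m.1) : f m = 0 := by
  obtain ⟨-, h1, -, -, -⟩ := Finset.mem_filter.1 hf
  have : m.1 * f m ≤ v := h1 ▸ Finset.single_le_sum (f := fun k : Fin (V+2) => k.1 * f k)
    (fun i _ => Nat.zero_le _) (Finset.mem_univ m)
  by_contra hne
  have : m.1 * 1 ≤ m.1 * f m := Nat.mul_le_mul_left _ (by omega)
  omega

theorem ext_restrict {V l v : ℕ} (hvV : v ≤ V) {f : Fin (V+2) → ℕ} (hf : f ∈ AA V l v) :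
    extFun v V (fun a ha => f ⟨a, by simp only [Finset.mem_Icc] at ha; omega⟩) = f := by
  obtain ⟨-, h1, h2, h3, h4⟩ := Finset.mem_filter.1 hf
  funext m
  by_cases h : m.1 ∈ Finset.Icc 2 v
  · simp only [extFun, dif_pos h]
  · simp only [extFun, dif_neg h]
    simp only [Finset.mem_Icc, not_and_or, not_le] at h
    rcases h with h | h
    · have hm0 : m.1 = 0 ∨ m.1 = 1 := by omega
      rcases hm0 with hm0 | hm0
      · have : m = 0 := Fin.ext (by simpa using hm0)
        rw [this]; exact h3.symm
      · have : m = 1 := Fin.ext (by simpa using hm0)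
        rw [this]; exact h4.symm
    · exact (fzero_of_big hf h).symm

theorem cCoeff_eq_cAux (l v V : ℕ) (hvV : v ≤ V) : cCoeff l v = cAux l v V := by
  rw [cCoeff, cAux, ← Finset.sum_filter]
  refine Finset.sum_bij'
    (fun s hs => extFun v V s)
    (fun f hf => fun a ha => f ⟨a, by simp only [Finset.mem_Icc] at ha; omega⟩)
    ?_ ?_ ?_ ?_ ?_
  · intro s hs
    obtain ⟨hs1, hs2⟩ := Finset.mem_filter.1 hs
    rw [Finset.mem_pi] at hs1
    refine Finset.mem_filter.2 ⟨Fintype.mem_piFinset.2 ?_, ?_, ?_, ?_, ?_⟩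
    · intro m
      by_cases h : m.1 ∈ Finset.Icc 2 v
      · simp only [extFun, dif_pos h, Finset.mem_range]
        have := hs1 m.1 h
        simp only [Finset.mem_range] at this; omega
      · simp [extFun, h]
    · rw [glue_sum hvV s (fun m t => m * t) (fun m => by simp)]; exact hs2.1
    · rw [glue_sum hvV s (fun m t => t) (fun m => rfl)]; exact hs2.2
    · simp [extFun]
    · have : (1 : Fin (V+2)).1 = 1 := rfl
      simp [extFun, this]
  · intro f hf
    obtain ⟨-, h1, h2, -, -⟩ := Finset.mem_filter.1 hf
    refine Finset.mem_filter.2 ⟨Finset.mem_pi.2 ?_, ?_, ?_⟩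
    · intro a ha
      simp only [Finset.mem_Icc] at ha
      have hle := Finset.single_le_sum (f := fun k : Fin (V+2) => k.1 * f k)
        (fun i _ => Nat.zero_le _) (Finset.mem_univ (⟨a, by omega⟩ : Fin (V+2)))
      simp only at hle
      replace hle := le_of_le_of_eq hle h1
      have : f ⟨a, by omega⟩ ≤ a * f ⟨a, by omega⟩ := Nat.le_mul_of_pos_left _ (by omega)
      simp only [Finset.mem_range]; omega
    · have e1 := glue_sum hvV (fun a ha => f ⟨a, by simp only [Finset.mem_Icc] at ha; omega⟩)
        (fun m t => m * t) (fun m => by simp)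
      rw [ext_restrict hvV hf] at e1
      exact e1.symm.trans h1
    · have e1 := glue_sum hvV (fun a ha => f ⟨a, by simp only [Finset.mem_Icc] at ha; omega⟩)
        (fun m t => t) (fun m => rfl)
      rw [ext_restrict hvV hf] at e1
      exact e1.symm.trans h2
  · intro s hs
    funext a ha
    have h : a ∈ Finset.Icc 2 v := ha
    simp [extFun, h]
  · intro f hf
    exact ext_restrict hvV hf
  · intro s hs
    exact (glue_prod hvV s (fun m t => 1 / ((Nat.factorial t : ℝ) * (Nat.factorial m : ℝ) ^ t))
      (fun m => by simp)).symm

theorem claimM (u kk V : ℕ) (hV : u + 2 ≤ V) (m : Fin (V+2)) (hm : 3 ≤ m.1) :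
    ∑ f ∈ AA V (kk+1) (u+2), ((m.1 * f m : ℕ) : ℝ) * ww V f
      = ∑ g ∈ AA V (kk+1) (u+1),
          ((g ⟨m.1 - 1, by have := m.2; omega⟩ : ℕ) : ℝ) * ww V g := by
  set mp : Fin (V+2) := ⟨m.1 - 1, by have := m.2; omega⟩ with hmpdef
  have hmpv : mp.1 = m.1 - 1 := rfl
  have hne : m ≠ mp := Fin.ne_of_val_ne (by omega)
  have hmp2 : 2 ≤ mp.1 := by omega
  rw [← Finset.sum_filter_of_ne (p := fun f : Fin (V+2) → ℕ => f m ≠ 0)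
    (by intro f _ hne0 h0; apply hne0; rw [h0]; simp)]
  conv_rhs => rw [← Finset.sum_filter_of_ne (p := fun g : Fin (V+2) → ℕ => g mp ≠ 0)
    (by intro g _ hne0 h0; apply hne0; rw [h0]; simp)]
  refine Finset.sum_nbij'
    (fun f => Function.update (Function.update f m (f m - 1)) mp (f mp + 1))
    (fun g => Function.update (Function.update g mp (g mp - 1)) m (g m + 1))
    ?_ ?_ ?_ ?_ ?_
  · -- forward membership
    intro f hf
    obtain ⟨hfA, hfm⟩ := Finset.mem_filter.1 hf
    obtain ⟨hpi, c1, c2, c3, c4⟩ := Finset.mem_filter.1 hfA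
    rw [Fintype.mem_piFinset] at hpi
    have hfm1 : 1 ≤ f m := by omega
    have hsplit1 := (split2' hne (fun j : Fin (V+2) => j.1 * f j)).symm.trans c1
    have hsplit2 := (split2' hne (fun j : Fin (V+2) => f j)).symm.trans c2
    have hble : mp.1 * f mp ≤ u + 2 := by
      have := Finset.single_le_sum (f := fun k : Fin (V+2) => k.1 * f k)
        (fun i _ => Nat.zero_le _) (Finset.mem_univ mp)
      exact le_of_le_of_eq this c1
    have hb2 : 2 * f mp ≤ mp.1 * f mp := Nat.mul_le_mul_right _ hmp2
    refine Finset.mem_filter.2 ⟨Finset.mem_filter.2 ⟨Fintype.mem_piFinset.2 ?_, ?_, ?_, ?_, ?_⟩, ?_⟩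
    · intro j
      by_cases hj1 : j = mp
      · rw [hj1, Function.update_self]
        simp only [Finset.mem_range]
        omega
      · rw [Function.update_of_ne hj1]
        by_cases hj2 : j = m
        · rw [hj2, Function.update_self]
          have := hpi m
          simp only [Finset.mem_range] at this ⊢
          omega
        · rw [Function.update_of_ne hj2]; exact hpi j
    · refine (sum_update2 hne (fun (j : Fin (V+2)) (t : ℕ) => j.1 * t) f _ _).trans ?_
      have hmul1 : m.1 * (f m - 1) + m.1 = m.1 * f m := by
        rw [← Nat.mul_succ]; congr 1; omega
      have hmul2 : mp.1 * (f mp + 1) = mp.1 * f mp + mp.1 := Nat.mul_succ _ _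
      have l1 : (m.1 - 1) * f mp = mp.1 * f mp := rfl
      have l2 : mp.1 = m.1 - 1 := rfl
      omega
    · refine (sum_update2 hne (fun (_ : Fin (V+2)) (t : ℕ) => t) f _ _).trans ?_
      omega
    · have h0mp : (0 : Fin (V+2)) ≠ mp := Fin.ne_of_val_ne (by simp; omega)
      have h0m : (0 : Fin (V+2)) ≠ m := Fin.ne_of_val_ne (by simp; omega)
      rw [Function.update_of_ne h0mp, Function.update_of_ne h0m]; exact c3
    · have h1mp : (1 : Fin (V+2)) ≠ mp := Fin.ne_of_val_ne (by simp [Fin.val_one]; omega)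
      have h1m : (1 : Fin (V+2)) ≠ m := Fin.ne_of_val_ne (by simp [Fin.val_one]; omega)
      rw [Function.update_of_ne h1mp, Function.update_of_ne h1m]; exact c4
    · rw [Function.update_self]; omega
  · -- backward membership
    intro g hg
    obtain ⟨hgA, hgmp⟩ := Finset.mem_filter.1 hg
    obtain ⟨hpi, c1, c2, c3, c4⟩ := Finset.mem_filter.1 hgA
    rw [Fintype.mem_piFinset] at hpi
    have hgmp1 : 1 ≤ g mp := by omega
    have hne' : mp ≠ m := hne.symm
    have hsplit1 := (split2' hne' (fun j : Fin (V+2) => j.1 * g j)).symm.trans c1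
    have hsplit2 := (split2' hne' (fun j : Fin (V+2) => g j)).symm.trans c2
    have hble : m.1 * g m ≤ u + 1 := by
      have := Finset.single_le_sum (f := fun k : Fin (V+2) => k.1 * g k)
        (fun i _ => Nat.zero_le _) (Finset.mem_univ m)
      exact le_of_le_of_eq this c1
    have hb3 : 3 * g m ≤ m.1 * g m := Nat.mul_le_mul_right _ hm
    refine Finset.mem_filter.2 ⟨Finset.mem_filter.2 ⟨Fintype.mem_piFinset.2 ?_, ?_, ?_, ?_, ?_⟩, ?_⟩
    · intro j
      by_cases hj1 : j = m
      · rw [hj1, Function.update_self]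
        simp only [Finset.mem_range]
        omega
      · rw [Function.update_of_ne hj1]
        by_cases hj2 : j = mp
        · rw [hj2, Function.update_self]
          have := hpi mp
          simp only [Finset.mem_range] at this ⊢
          omega
        · rw [Function.update_of_ne hj2]; exact hpi j
    · refine (sum_update2 hne' (fun (j : Fin (V+2)) (t : ℕ) => j.1 * t) g _ _).trans ?_
      have hmul1 : mp.1 * (g mp - 1) + mp.1 = mp.1 * g mp := by
        rw [← Nat.mul_succ]; congr 1; omega
      have hmul2 : m.1 * (g m + 1) = m.1 * g m + m.1 := Nat.mul_succ _ _
      have l1 : (m.1 - 1) * g mp = mp.1 * g mp := rfl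
      have l2 : mp.1 = m.1 - 1 := rfl
      omega
    · refine (sum_update2 hne' (fun (_ : Fin (V+2)) (t : ℕ) => t) g _ _).trans ?_
      omega
    · have h0mp : (0 : Fin (V+2)) ≠ mp := Fin.ne_of_val_ne (by simp; omega)
      have h0m : (0 : Fin (V+2)) ≠ m := Fin.ne_of_val_ne (by simp; omega)
      rw [Function.update_of_ne h0m, Function.update_of_ne h0mp]; exact c3
    · have h1mp : (1 : Fin (V+2)) ≠ mp := Fin.ne_of_val_ne (by simp [Fin.val_one]; omega)
      have h1m : (1 : Fin (V+2)) ≠ m := Fin.ne_of_val_ne (by simp [Fin.val_one]; omega)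
      rw [Function.update_of_ne h1m, Function.update_of_ne h1mp]; exact c4
    · rw [Function.update_self]; omega
  · -- left inverse
    intro f hf
    have hfm : f m ≠ 0 := (Finset.mem_filter.1 hf).2
    funext j
    by_cases hj1 : j = m
    · subst hj1
      rw [Function.update_self, Function.update_of_ne hne, Function.update_self]
      omega
    · rw [Function.update_of_ne hj1]
      by_cases hj2 : j = mp
      · subst hj2
        rw [Function.update_self, Function.update_self]
        omega
      · rw [Function.update_of_ne hj2, Function.update_of_ne hj2, Function.update_of_ne hj1]
  · -- right inverse
    intro g hg
    have hgmp : g mp ≠ 0 := (Finset.mem_filter.1 hg).2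
    funext j
    by_cases hj1 : j = mp
    · subst hj1
      rw [Function.update_of_ne hne.symm, Function.update_self, Function.update_self]
      omega
    · rw [Function.update_of_ne hj1]
      by_cases hj2 : j = m
      · subst hj2
        rw [Function.update_self, Function.update_self]
        omega
      · rw [Function.update_of_ne hj2, Function.update_of_ne hj2, Function.update_of_ne hj1]
  · -- terms
    intro f hf
    have hfm : f m ≠ 0 := (Finset.mem_filter.1 hf).2
    have hval1 : Function.update (Function.update f m (f m - 1)) mp (f mp + 1) mp = f mp + 1 :=
      Function.update_self _ _ _
    rw [hval1]
    rw [ww, ww]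
    rw [prod_update2 hne (fun (j : Fin (V+2)) (t : ℕ) =>
      1 / ((Nat.factorial t : ℝ) * (Nat.factorial j.1 : ℝ) ^ t)) f (f m - 1) (f mp + 1)]
    rw [split2 hne (fun j : Fin (V+2) =>
      1 / ((Nat.factorial (f j) : ℝ) * (Nat.factorial j.1 : ℝ) ^ (f j)))]
    obtain ⟨a0, ha0⟩ : ∃ a0, f m = a0 + 1 := ⟨f m - 1, by omega⟩
    obtain ⟨mm0, hmm0⟩ : ∃ t, m.1 = t + 1 := ⟨m.1 - 1, by omega⟩
    have hmp_eq : mp.1 = mm0 := by omega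
    have hsub : f m - 1 = a0 := by omega
    rw [hsub, ha0, hmm0]
    rw [hmp_eq]
    have key := scalar_key mm0 a0 (f mp)
    set P := ∏ k ∈ (univ.erase m).erase mp,
      1 / ((Nat.factorial (f k) : ℝ) * (Nat.factorial k.1 : ℝ) ^ (f k)) with hP
    push_cast at key ⊢
    linear_combination P * key

theorem claim2 (u kk V : ℕ) (hV : u + 2 ≤ V) :
    ∑ f ∈ AA V (kk+1) (u+2),
        (((⟨2, by omega⟩ : Fin (V+2)).1 * f ⟨2, by omega⟩ : ℕ) : ℝ) * ww V f
      = cAux kk u V := by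
  set two : Fin (V+2) := ⟨2, by omega⟩ with htwodef
  have htwov : two.1 = 2 := rfl
  rw [cAux]
  rw [← Finset.sum_filter_of_ne (p := fun f : Fin (V+2) → ℕ => f two ≠ 0)
    (by intro f _ hne0 h0; apply hne0; rw [h0]; simp)]
  refine Finset.sum_nbij'
    (fun f => Function.update f two (f two - 1))
    (fun h => Function.update h two (h two + 1))
    ?_ ?_ ?_ ?_ ?_
  · -- forward membership
    intro f hf
    obtain ⟨hfA, hfm⟩ := Finset.mem_filter.1 hf
    obtain ⟨hpi, c1, c2, c3, c4⟩ := Finset.mem_filter.1 hfA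
    rw [Fintype.mem_piFinset] at hpi
    have hfm1 : 1 ≤ f two := by omega
    have hsplit1 := (split1' two (fun j : Fin (V+2) => j.1 * f j)).symm.trans c1
    have hsplit2 := (split1' two (fun j : Fin (V+2) => f j)).symm.trans c2
    simp only [htwov] at hsplit1 hsplit2
    refine Finset.mem_filter.2 ⟨Fintype.mem_piFinset.2 ?_, ?_, ?_, ?_, ?_⟩
    · intro j
      by_cases hj : j = two
      · rw [hj, Function.update_self]
        have := hpi two
        simp only [Finset.mem_range] at this ⊢
        omega
      · rw [Function.update_of_ne hj]; exact hpi j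
    · refine (sum_update1 two (fun (j : Fin (V+2)) (t : ℕ) => j.1 * t) f _).trans ?_
      simp only [htwov]
      omega
    · refine (sum_update1 two (fun (_ : Fin (V+2)) (t : ℕ) => t) f _).trans ?_
      omega
    · have h0two : (0 : Fin (V+2)) ≠ two := Fin.ne_of_val_ne (by simp)
      rw [Function.update_of_ne h0two]; exact c3
    · have h1two : (1 : Fin (V+2)) ≠ two := Fin.ne_of_val_ne (by simp [Fin.val_one, htwov])
      rw [Function.update_of_ne h1two]; exact c4
  · -- backward membership
    intro h hh
    obtain ⟨hpi, c1, c2, c3, c4⟩ := Finset.mem_filter.1 hh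
    rw [Fintype.mem_piFinset] at hpi
    have hsplit1 := (split1' two (fun j : Fin (V+2) => j.1 * h j)).symm.trans c1
    have hsplit2 := (split1' two (fun j : Fin (V+2) => h j)).symm.trans c2
    simp only [htwov] at hsplit1 hsplit2
    have hble : two.1 * h two ≤ u := by
      have := Finset.single_le_sum (f := fun k : Fin (V+2) => k.1 * h k)
        (fun i _ => Nat.zero_le _) (Finset.mem_univ two)
      exact le_of_le_of_eq this c1
    refine Finset.mem_filter.2 ⟨Finset.mem_filter.2 ⟨Fintype.mem_piFinset.2 ?_, ?_, ?_, ?_, ?_⟩, ?_⟩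
    · intro j
      by_cases hj : j = two
      · rw [hj, Function.update_self]
        simp only [Finset.mem_range]
        simp only [htwov] at hble
        omega
      · rw [Function.update_of_ne hj]; exact hpi j
    · refine (sum_update1 two (fun (j : Fin (V+2)) (t : ℕ) => j.1 * t) h _).trans ?_
      simp only [htwov]
      omega
    · refine (sum_update1 two (fun (_ : Fin (V+2)) (t : ℕ) => t) h _).trans ?_
      omega
    · have h0two : (0 : Fin (V+2)) ≠ two := Fin.ne_of_val_ne (by simp)
      rw [Function.update_of_ne h0two]; exact c3
    · have h1two : (1 : Fin (V+2)) ≠ two := Fin.ne_of_val_ne (by simp [Fin.val_one, htwov])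
      rw [Function.update_of_ne h1two]; exact c4
    · rw [Function.update_self]; omega
  · -- left inverse
    intro f hf
    have hfm : f two ≠ 0 := (Finset.mem_filter.1 hf).2
    funext j
    by_cases hj : j = two
    · rw [hj, Function.update_self, Function.update_self]
      omega
    · rw [Function.update_of_ne hj, Function.update_of_ne hj]
  · -- right inverse
    intro h hh
    funext j
    by_cases hj : j = two
    · rw [hj, Function.update_self, Function.update_self]
      omega
    · rw [Function.update_of_ne hj, Function.update_of_ne hj]
  · -- terms
    intro f hf
    have hfm : f two ≠ 0 := (Finset.mem_filter.1 hf).2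
    rw [ww, ww]
    rw [prod_update1 two (fun (j : Fin (V+2)) (t : ℕ) =>
      1 / ((Nat.factorial t : ℝ) * (Nat.factorial j.1 : ℝ) ^ t)) f (f two - 1)]
    rw [split1 two (fun j : Fin (V+2) =>
      1 / ((Nat.factorial (f j) : ℝ) * (Nat.factorial j.1 : ℝ) ^ (f j)))]
    obtain ⟨a0, ha0⟩ : ∃ a0, f two = a0 + 1 := ⟨f two - 1, by omega⟩
    have hsub : f two - 1 = a0 := by omega
    rw [hsub, ha0]
    have key := scalar_key2 a0
    have htwofac : (Nat.factorial two.1 : ℝ) = (Nat.factorial 2 : ℝ) := rfl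
    rw [htwofac]
    set Q := ∏ k ∈ univ.erase two,
      1 / ((Nat.factorial (f k) : ℝ) * (Nat.factorial k.1 : ℝ) ^ (f k)) with hQ
    push_cast at key ⊢
    linear_combination Q * key

theorem core (u kk V : ℕ) (hV : u + 2 ≤ V) :
    ((u:ℝ)+2) * cAux (kk+1) (u+2) V
      = ((kk:ℝ)+1) * cAux (kk+1) (u+1) V + cAux kk u V := by
  have lhs_eq : ((u:ℝ)+2) * cAux (kk+1) (u+2) V
      = ∑ m : Fin (V+2), ∑ f ∈ AA V (kk+1) (u+2), ((m.1 * f m : ℕ) : ℝ) * ww V f := by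
    rw [cAux, Finset.mul_sum]
    rw [Finset.sum_congr rfl (fun f hf => ?_), Finset.sum_comm]
    obtain ⟨-, c1, -, -, -⟩ := Finset.mem_filter.1 hf
    rw [← Finset.sum_mul]
    congr 1
    rw [← Nat.cast_sum, c1]
    push_cast; ring
  have hlow : ∑ m ∈ univ.filter (fun m : Fin (V+2) => ¬ 3 ≤ m.1),
      ∑ f ∈ AA V (kk+1) (u+2), ((m.1 * f m : ℕ) : ℝ) * ww V f
      = ∑ f ∈ AA V (kk+1) (u+2),
          (((⟨2, by omega⟩ : Fin (V+2)).1 * f ⟨2, by omega⟩ : ℕ) : ℝ) * ww V f := by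
    apply Finset.sum_eq_single_of_mem (⟨2, by omega⟩ : Fin (V+2))
    · exact Finset.mem_filter.2 ⟨Finset.mem_univ _, by norm_num⟩
    · intro b hb hbne
      have hb2 : b.1 ≤ 2 := by have := (Finset.mem_filter.1 hb).2; omega
      have hbne2 : b.1 ≠ 2 := fun h => hbne (Fin.ext h)
      apply Finset.sum_eq_zero
      intro f hf
      rcases (show b.1 = 0 ∨ b.1 = 1 by omega) with h | h
      · simp [h]
      · have hb1 : b = 1 := Fin.ext (by simp [Fin.val_one, h])
        obtain ⟨-, -, -, -, c4⟩ := Finset.mem_filter.1 hf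
        rw [hb1, c4]
        simp
  have hhigh : ∑ m ∈ univ.filter (fun m : Fin (V+2) => 3 ≤ m.1),
      ∑ f ∈ AA V (kk+1) (u+2), ((m.1 * f m : ℕ) : ℝ) * ww V f
      = ((kk:ℝ)+1) * cAux (kk+1) (u+1) V := by
    rw [show (∑ m ∈ univ.filter (fun m : Fin (V+2) => 3 ≤ m.1),
        ∑ f ∈ AA V (kk+1) (u+2), ((m.1 * f m : ℕ) : ℝ) * ww V f)
        = ∑ m ∈ univ.filter (fun m : Fin (V+2) => 3 ≤ m.1),
            ∑ g ∈ AA V (kk+1) (u+1),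
              ((g ⟨m.1 - 1, by have := m.2; omega⟩ : ℕ) : ℝ) * ww V g from
      Finset.sum_congr rfl (fun m hm => claimM u kk V hV m (Finset.mem_filter.1 hm).2)]
    rw [Finset.sum_comm]
    rw [cAux, Finset.mul_sum]
    apply Finset.sum_congr rfl
    intro g hg
    rw [← Finset.sum_mul]
    congr 1
    obtain ⟨hpi, c1, c2, c3, c4⟩ := Finset.mem_filter.1 hg
    have hnat : ∑ m ∈ univ.filter (fun m : Fin (V+2) => 3 ≤ m.1),
        g ⟨m.1 - 1, by have := m.2; omega⟩ = kk + 1 := by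
      have step1 : ∑ m ∈ univ.filter (fun m : Fin (V+2) => 3 ≤ m.1),
          g ⟨m.1 - 1, by have := m.2; omega⟩
          = ∑ j ∈ univ.filter (fun j : Fin (V+2) => 2 ≤ j.1 ∧ j.1 ≤ V), g j := by
        refine Finset.sum_nbij' (fun m => ⟨m.1 - 1, by have := m.2; omega⟩)
          (fun j => if h : j.1 ≤ V then (⟨j.1 + 1, by omega⟩ : Fin (V+2)) else j)
          ?_ ?_ ?_ ?_ ?_
        · intro m hm
          have h3 := (Finset.mem_filter.1 hm).2
          have hlt := m.2
          refine Finset.mem_filter.2 ⟨Finset.mem_univ _, by simp; omega⟩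
        · intro j hj
          have h2 := (Finset.mem_filter.1 hj).2
          rw [dif_pos h2.2]
          refine Finset.mem_filter.2 ⟨Finset.mem_univ _, by simp; omega⟩
        · intro m hm
          have h3 := (Finset.mem_filter.1 hm).2
          have hlt := m.2
          dsimp only
          rw [dif_pos (show m.1 - 1 ≤ V by omega)]
          exact Fin.ext (by simp; omega)
        · intro j hj
          have h2 := (Finset.mem_filter.1 hj).2
          rw [dif_pos h2.2]
          exact Fin.ext (by simp)
        · intro m hm; rfl
      rw [step1]
      have step2 : ∑ j ∈ univ.filter (fun j : Fin (V+2) => 2 ≤ j.1 ∧ j.1 ≤ V), g j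
          = ∑ j : Fin (V+2), g j := by
        apply Finset.sum_subset (Finset.filter_subset _ _)
        intro j _ hj
        simp only [Finset.mem_filter, Finset.mem_univ, true_and, not_and, not_le] at hj
        by_cases h2 : 2 ≤ j.1
        · -- then j.1 > V, i.e. j.1 = V+1 > u+1
          have : V < j.1 := hj h2
          exact fzero_of_big (Finset.mem_filter.2 ⟨hpi, c1, c2, c3, c4⟩) (by omega)
        · rcases (show j.1 = 0 ∨ j.1 = 1 by omega) with h | h
          · have : j = 0 := Fin.ext (by simpa using h)
            rw [this]; exact c3
          · have : j = 1 := Fin.ext (by simpa using h)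
            rw [this]; exact c4
      rw [step2]
      exact c2
    rw [← Nat.cast_sum, hnat]
    push_cast; ring
  rw [lhs_eq, ← Finset.sum_filter_add_sum_filter_not univ (fun m : Fin (V+2) => 3 ≤ m.1)]
  rw [hlow, hhigh, claim2 u kk V hV]

theorem cCoeff_eq_zero (l v : ℕ) (h : v < 2 * l) : cCoeff l v = 0 := by
  rw [cCoeff]
  apply Finset.sum_eq_zero
  intro s hs
  rw [if_neg]
  rintro ⟨h1, h2⟩
  have hmono : ∀ m ∈ (Finset.Icc 2 v).attach, 2 * s m.1 m.2 ≤ m.1 * s m.1 m.2 := by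
    intro m _
    refine Nat.mul_le_mul_right _ ?_
    have := m.2; simp only [Finset.mem_Icc] at this; omega
  have hge := Finset.sum_le_sum hmono
  rw [h1] at hge
  rw [← Finset.mul_sum, h2] at hge
  omega

theorem main_identity (u l : ℕ) (hl : 1 ≤ l) :
    (((u+1 : ℕ) : ℝ) + 1) * cCoeff l (u+1+1)
      = (l : ℝ) * cCoeff l (u+1) + cCoeff (l-1) (u+1-1) := by
  obtain ⟨kk, rfl⟩ : ∃ kk, l = kk + 1 := ⟨l - 1, by omega⟩
  have h1 : cCoeff (kk+1) (u+1+1) = cAux (kk+1) (u+2) (u+2) :=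
    cCoeff_eq_cAux _ _ _ (by omega)
  have h2 : cCoeff (kk+1) (u+1) = cAux (kk+1) (u+1) (u+2) :=
    cCoeff_eq_cAux _ _ _ (by omega)
  have h3 : cCoeff (kk+1-1) (u+1-1) = cAux kk u (u+2) := by
    have e1 : kk + 1 - 1 = kk := by omega
    have e2 : u + 1 - 1 = u := by omega
    rw [e1, e2]
    exact cCoeff_eq_cAux _ _ _ (by omega)
  rw [h1, h2, h3]
  have hc := core u kk (u+2) le_rfl
  push_cast at hc ⊢
  linarith [hc]

/-- Recurrence for the coefficients `c_{l,v}` of the Poisson central moments: for every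
integer `v ≥ 2`, if `v` is even then `(v+1) c_{l,v+1} = l c_{l,v} + c_{l−1,v−1}` for
`l = 1, …, ⌊(v+1)/2⌋`; if `v` is odd then the same identity holds for
`l = 1, …, ⌊(v+1)/2⌋ − 1`, together with `(v+1) c_{⌊(v+1)/2⌋,v+1} = c_{⌊(v−1)/2⌋,v−1}`. -/
theorem cCoeff_recurrence (v : ℕ) (hv : 2 ≤ v) :
    (Even v → ∀ l, 1 ≤ l → l ≤ (v + 1) / 2 →
      ((v : ℝ) + 1) * cCoeff l (v + 1) = (l : ℝ) * cCoeff l v + cCoeff (l - 1) (v - 1)) ∧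
    (Odd v →
      (∀ l, 1 ≤ l → l ≤ (v + 1) / 2 - 1 →
        ((v : ℝ) + 1) * cCoeff l (v + 1) = (l : ℝ) * cCoeff l v + cCoeff (l - 1) (v - 1)) ∧
      ((v : ℝ) + 1) * cCoeff ((v + 1) / 2) (v + 1) = cCoeff ((v - 1) / 2) (v - 1)) := by
  obtain ⟨u, rfl⟩ : ∃ u, v = u + 1 := ⟨v - 1, by omega⟩
  have hu : 1 ≤ u := by omega
  constructor
  · intro _ l hl _
    exact main_identity u l hl
  · intro hodd
    refine ⟨fun l hl _ => main_identity u l hl, ?_⟩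
    obtain ⟨t, ht⟩ := hodd
    have hl0 : (u + 1 + 1) / 2 = t + 1 := by omega
    have hl0' : (u + 1 - 1) / 2 = t := by omega
    rw [hl0, hl0']
    have hmain := main_identity u (t+1) (by omega)
    have hzero : cCoeff (t+1) (u+1) = 0 := cCoeff_eq_zero _ _ (by omega)
    rw [hzero] at hmain
    have e1 : t + 1 - 1 = t := by omega
    rw [e1] at hmain
    rw [hmain]
    ring
end
end

section
/- For every real λ > 0 and every integer v ≥ 2, the central moments of the Poisson(λ) distribution satisfy μ_v(λ) ≤ μ_{v+1}(λ) ≤ (vλ + ⌊v/2⌋)·μ_v(λ). -/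
open Finset

noncomputable section

/-- Associated Stirling numbers of the second kind: number of partitions of an
`n`-set into `j` blocks, each of size at least 2. -/
def A : ℕ → ℕ → ℕ
  | 0, 0 => 1
  | 0, _+1 => 0
  | 1, _ => 0
  | n+2, 0 => 0
  | n+2, j+1 => (j+1) * A (n+1) (j+1) + (n+1) * A n j

lemma A_zero (n : ℕ) : A (n+1) 0 = 0 := by
  cases n <;> simp [A]

lemma A_vanish : ∀ n j : ℕ, n < 2*j → A n j = 0 := by
  intro n
  induction n using Nat.strong_induction_on with
  | _ n ih =>
    match n with
    | 0 => intro j h; match j with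
           | 0 => omega
           | j+1 => simp [A]
    | 1 => intro j h; simp [A]
    | n+2 => intro j h
             match j with
             | 0 => omega
             | j+1 =>
               have h1 : A (n+1) (j+1) = 0 := ih (n+1) (by omega) (j+1) (by omega)
               have h2 : A n j = 0 := ih n (by omega) j (by omega)
               simp [A, h1, h2]

lemma A_vanish' {n j : ℕ} (h : n < j) : A n j = 0 := A_vanish n j (by omega)

lemma A_mono : ∀ n j : ℕ, A (n+1) j ≤ A (n+2) j := by
  intro n
  induction n using Nat.strong_induction_on with
  | _ n ih =>
    intro j
    match j with
    | 0 => rw [A_zero, A_zero]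
    | j+1 =>
      match n with
      | 0 => simp [A]
      | 1 =>
        -- A 3 (j+1) vs A 2 (j+1)
        match j with
        | 0 => simp [A]
        | j+1 =>
          -- A 2 (j+2) = (j+2)*A 1 (j+2) + 1 * A 0 (j+1) = 0
          simp [A]
      | m+2 =>
        show A (m+3) (j+1) ≤ A (m+4) (j+1)
        have e1 : A (m+4) (j+1) = (j+1) * A (m+3) (j+1) + (m+3) * A (m+2) j := by
          simp [A]
        have e2 : A (m+3) (j+1) = (j+1) * A (m+2) (j+1) + (m+2) * A (m+1) j := by
          simp [A]
        have h1 : A (m+2) (j+1) ≤ A (m+3) (j+1) := ih (m+1) (by omega) (j+1)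
        have h2 : A (m+1) j ≤ A (m+2) j := ih m (by omega) j
        rw [e1, e2]
        calc (j+1) * A (m+2) (j+1) + (m+2) * A (m+1) j
            ≤ (j+1) * A (m+3) (j+1) + (m+3) * A (m+2) j := by
              gcongr <;> omega
          _ = _ := rfl

lemma A_mono' {n m j : ℕ} (h1 : 1 ≤ n) (h2 : n ≤ m) : A n j ≤ A m j := by
  induction m with
  | zero => omega
  | succ m ihm =>
    rcases Nat.lt_or_ge n (m+1) with h | h
    · have hm : 1 ≤ m := by omega
      refine le_trans (ihm (by omega)) ?_
      obtain ⟨k, rfl⟩ : ∃ k, m = k + 1 := ⟨m-1, by omega⟩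
      exact A_mono k j
    · have : n = m + 1 := by omega
      subst this; exact le_rfl

lemma A_key (m j : ℕ) (hm : 1 ≤ m) :
    A (m+2) (j+1) ≤ (m+1) * A (m+1) j + ((m+1)/2) * A (m+1) (j+1) := by
  have e : A (m+2) (j+1) = (j+1) * A (m+1) (j+1) + (m+1) * A m j := by simp [A]
  rw [e]
  have h1 : (m+1) * A m j ≤ (m+1) * A (m+1) j :=
    Nat.mul_le_mul_left _ (A_mono' hm (by omega))
  have h2 : (j+1) * A (m+1) (j+1) ≤ ((m+1)/2) * A (m+1) (j+1) := by
    rcases Nat.eq_zero_or_pos (A (m+1) (j+1)) with h | h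
    · simp [h]
    · have hv : ¬ (m+1 < 2*(j+1)) := by
        intro hc
        rw [A_vanish (m+1) (j+1) hc] at h; omega
      have : j+1 ≤ (m+1)/2 := Nat.le_div_iff_mul_le (by norm_num) |>.mpr (by omega)
      exact Nat.mul_le_mul_right _ this
  omega

lemma steinA : ∀ v i : ℕ, ∑ j ∈ range v, (v.choose j) * A j i = A (v+1) (i+1) := by
  intro v
  induction v using Nat.strong_induction_on with
  | _ v ih =>
    intro i
    match v with
    | 0 => simp [A]
    | 1 => simp [A]
    | n+2 =>
      have ih1 : ∀ i, ∑ j ∈ range (n+1), ((n+1).choose j) * A j i = A (n+2) (i+1) :=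
        ih (n+1) (by omega)
      have ih0 : ∀ i, ∑ j ∈ range n, (n.choose j) * A j i = A (n+1) (i+1) :=
        ih n (by omega)
      -- LHS decomposition
      have lhs_eq : ∑ j ∈ range (n+2), ((n+2).choose j) * A j i
          = A 0 i + ∑ j ∈ range (n+1), ((n+1).choose j + (n+1).choose (j+1)) * A (j+1) i := by
        rw [Finset.sum_range_succ' (fun j => ((n+2).choose j) * A j i) (n+1)]
        simp [Nat.choose_succ_succ]
        ring
      -- split the sum
      have split : ∑ j ∈ range (n+1), ((n+1).choose j + (n+1).choose (j+1)) * A (j+1) i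
          = (∑ j ∈ range (n+1), ((n+1).choose j) * A (j+1) i)
            + ∑ j ∈ range (n+1), ((n+1).choose (j+1)) * A (j+1) i := by
        rw [← Finset.sum_add_distrib]
        congr 1; funext j; ring
      -- second piece plus A 0 i
      have piece2 : A 0 i + ∑ j ∈ range (n+1), ((n+1).choose (j+1)) * A (j+1) i
          = A (n+2) (i+1) + A (n+1) i := by
        have := Finset.sum_range_succ' (fun j => ((n+1).choose j) * A j i) (n+1)
        rw [Finset.sum_range_succ] at this
        -- this : ∑_{range(n+1)} C(n+1,j)A j i + C(n+1,n+1) A (n+1) i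
        --      = ∑_{range(n+1)} C(n+1,j+1) A (j+1) i + C(n+1,0) A 0 i
        rw [ih1 i] at this
        simp at this
        omega
      -- T = first piece
      have T_eq : ∑ j ∈ range (n+1), ((n+1).choose j) * A (j+1) i
          = i * A (n+2) (i+1) + (n+1) * A (n+1) i := by
        match i with
        | 0 =>
          have : ∀ j ∈ range (n+1), ((n+1).choose j) * A (j+1) 0 = 0 := by
            intro j _; rw [A_zero]; ring
          rw [Finset.sum_congr rfl this]
          simp [A_zero]
        | l+1 =>
          rw [Finset.sum_range_succ' (fun j => ((n+1).choose j) * A (j+1) (l+1)) n]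
          have hA1 : A 1 (l+1) = 0 := by simp [A]
          rw [hA1]
          have step : ∀ j ∈ range n, ((n+1).choose (j+1)) * A (j+2) (l+1)
              = (l+1) * (((n+1).choose (j+1)) * A (j+1) (l+1))
                + (n+1) * ((n.choose j) * A j l) := by
            intro j hj
            have eA : A (j+2) (l+1) = (l+1) * A (j+1) (l+1) + (j+1) * A j l := by
              simp [A]
            have hc : (n+1).choose (j+1) * (j+1) = (n+1) * n.choose j := by
              have := Nat.add_one_mul_choose_eq n j
              omega
            rw [eA]
            calc ((n+1).choose (j+1)) * ((l+1) * A (j+1) (l+1) + (j+1) * A j l)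
                = (l+1) * (((n+1).choose (j+1)) * A (j+1) (l+1))
                  + ((n+1).choose (j+1) * (j+1)) * A j l := by ring
              _ = _ := by rw [hc]; ring
          rw [Finset.sum_congr rfl step, Finset.sum_add_distrib, ← Finset.mul_sum,
            ← Finset.mul_sum, ih0 l]
          -- remaining: ∑_{j∈range n} C(n+1,j+1) A (j+1) (l+1) = A (n+2) (l+2)
          have inner : ∑ j ∈ range n, ((n+1).choose (j+1)) * A (j+1) (l+1)
              = A (n+2) (l+2) := by
            have h' := Finset.sum_range_succ' (fun j => ((n+1).choose j) * A j (l+1)) n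
            rw [ih1 (l+1)] at h'
            have hA0 : A 0 (l+1) = 0 := by simp [A]
            rw [hA0] at h'
            simpa using h'.symm
          rw [inner]
          ring
      have rhs : A (n+3) (i+1) = (i+1) * A (n+2) (i+1) + (n+2) * A (n+1) i := by
        simp [A]
      rw [lhs_eq, split, rhs]
      have e3 : (i+1) * A (n+2) (i+1) = i * A (n+2) (i+1) + A (n+2) (i+1) := by ring
      have e4 : (n+2) * A (n+1) i = (n+1) * A (n+1) i + A (n+1) i := by ring
      omega


lemma summable_pow_mul (lam : ℝ) (i : ℕ) :
    Summable (fun k : ℕ => (k:ℝ)^i * lam^k / (Nat.factorial k : ℝ)) := by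
  induction i using Nat.strong_induction_on with
  | _ i ih =>
    match i with
    | 0 => simpa using Real.summable_pow_div_factorial lam
    | j+1 =>
      rw [← summable_nat_add_iff 1]
      have key : ∀ k : ℕ,
          ∑ m ∈ Finset.range (j+1), (lam * (j.choose m : ℝ))
              * ((k:ℝ)^m * lam^k / (k.factorial : ℝ))
          = ((k+1:ℕ):ℝ)^(j+1) * lam^(k+1) / (((k+1).factorial : ℕ) : ℝ) := by
        intro k
        have hne : (k.factorial : ℝ) ≠ 0 := Nat.cast_ne_zero.mpr (Nat.factorial_ne_zero k)
        have hk1 : ((k:ℝ)+1) ≠ 0 := by positivity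
        have hfac : (((k+1).factorial : ℕ) : ℝ) = ((k:ℝ)+1) * (k.factorial : ℝ) := by
          rw [Nat.factorial_succ]; push_cast; ring
        have hbin : ((k:ℝ)+1)^j
            = ∑ m ∈ Finset.range (j+1), (k:ℝ)^m * (j.choose m : ℝ) := by
          have h := add_pow (k:ℝ) 1 j
          simpa using h
        have hstep : ∀ m ∈ Finset.range (j+1),
            (lam * (j.choose m : ℝ)) * ((k:ℝ)^m * lam^k / (k.factorial : ℝ))
            = ((k:ℝ)^m * (j.choose m : ℝ)) * (lam * lam^k / (k.factorial : ℝ)) := by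
          intro m _; ring
        rw [Finset.sum_congr rfl hstep, ← Finset.sum_mul, ← hbin, hfac]
        push_cast
        field_simp
        ring
      refine Summable.congr
        (f := fun k : ℕ => ∑ m ∈ Finset.range (j+1), (lam * (j.choose m : ℝ))
              * ((k:ℝ)^m * lam^k / (k.factorial : ℝ)))
        (summable_sum fun m hm => ((ih m (Finset.mem_range.mp hm)).mul_left _)) ?_
      intro k
      simpa using key k

lemma pois_expand (lam : ℝ) (m k : ℕ) :
    pois lam k * ((k:ℝ) - lam)^m
      = ∑ i ∈ Finset.range (m+1),
          (Real.exp (-lam) * (-lam)^(m-i) * (m.choose i : ℝ))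
            * ((k:ℝ)^i * lam^k / (k.factorial : ℝ)) := by
  unfold pois
  rw [sub_eq_add_neg, add_pow, Finset.mul_sum]
  exact Finset.sum_congr rfl fun i _ => by ring

lemma pois_expand' (lam : ℝ) (m k : ℕ) :
    pois lam k * (k:ℝ) * ((k:ℝ) - lam)^m
      = ∑ i ∈ Finset.range (m+1),
          (Real.exp (-lam) * (-lam)^(m-i) * (m.choose i : ℝ))
            * ((k:ℝ)^(i+1) * lam^k / (k.factorial : ℝ)) := by
  unfold pois
  rw [sub_eq_add_neg, add_pow, Finset.mul_sum]
  exact Finset.sum_congr rfl fun i _ => by rw [pow_succ]; ring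

lemma summable_pois (lam : ℝ) (m : ℕ) :
    Summable (fun k : ℕ => pois lam k * ((k:ℝ) - lam)^m) :=
  Summable.congr (summable_sum fun i _ => ((summable_pow_mul lam i).mul_left _))
    (fun k => (pois_expand lam m k).symm)

lemma summable_pois' (lam : ℝ) (m : ℕ) :
    Summable (fun k : ℕ => pois lam k * (k:ℝ) * ((k:ℝ) - lam)^m) :=
  Summable.congr (summable_sum fun i _ => ((summable_pow_mul lam (i+1)).mul_left _))
    (fun k => (pois_expand' lam m k).symm)

lemma pois_shift (lam : ℝ) (k : ℕ) :
    pois lam (k+1) * ((k:ℝ)+1) = lam * pois lam k := by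
  unfold pois
  have hne : (k.factorial : ℝ) ≠ 0 := Nat.cast_ne_zero.mpr (Nat.factorial_ne_zero k)
  have hk1 : ((k:ℝ)+1) ≠ 0 := by positivity
  rw [Nat.factorial_succ]
  push_cast
  field_simp
  ring

lemma tsum_pois (lam : ℝ) : ∑' k : ℕ, pois lam k = 1 := by
  have h1 : ∀ k : ℕ, pois lam k = Real.exp (-lam) * (lam^k / (k.factorial : ℝ)) :=
    fun k => by unfold pois; ring
  rw [tsum_congr h1, tsum_mul_left]
  have h2 : ∑' n : ℕ, lam^n / (n.factorial : ℝ) = Real.exp lam := by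
    rw [Real.exp_eq_exp_ℝ, NormedSpace.exp_eq_tsum ℝ]
    exact tsum_congr fun n => by rw [smul_eq_mul, div_eq_inv_mul]
  rw [h2, ← Real.exp_add]
  simp

lemma stein (lam : ℝ) (v : ℕ) :
    poisCentralMoment lam (v+1)
      = lam * ∑ i ∈ Finset.range v, (v.choose i : ℝ) * poisCentralMoment lam i := by
  have hs : ∀ m, Summable (fun k : ℕ => pois lam k * ((k:ℝ)-lam)^m) := summable_pois lam
  have hs' : Summable (fun k : ℕ => pois lam k * (k:ℝ) * ((k:ℝ)-lam)^v) :=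
    summable_pois' lam v
  have step1 : poisCentralMoment lam (v+1)
      = ∑' k : ℕ, (pois lam k * (k:ℝ) * ((k:ℝ)-lam)^v
          - lam * (pois lam k * ((k:ℝ)-lam)^v)) := by
    unfold poisCentralMoment
    exact tsum_congr fun k => by rw [pow_succ]; ring
  rw [step1, Summable.tsum_sub hs' ((hs v).mul_left lam), tsum_mul_left]
  have shift : ∑' k : ℕ, pois lam k * (k:ℝ) * ((k:ℝ)-lam)^v
      = lam * ∑' k : ℕ, pois lam k * (((k:ℝ)+1)-lam)^v := by
    rw [Summable.tsum_eq_zero_add hs']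
    have h0 : pois lam 0 * ((0:ℕ):ℝ) * (((0:ℕ):ℝ)-lam)^v = 0 := by simp
    have hshift : ∀ k : ℕ, pois lam (k+1) * ((k+1:ℕ):ℝ) * (((k+1:ℕ):ℝ)-lam)^v
        = lam * (pois lam k * (((k:ℝ)+1)-lam)^v) := by
      intro k
      have h := pois_shift lam k
      push_cast
      rw [← mul_assoc, h]
    rw [h0, tsum_congr hshift, tsum_mul_left]
    simp
  have binom : ∑' k : ℕ, pois lam k * (((k:ℝ)+1)-lam)^v
      = ∑ i ∈ Finset.range (v+1), (v.choose i : ℝ) * poisCentralMoment lam i := by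
    have h1 : ∀ k : ℕ, pois lam k * (((k:ℝ)+1)-lam)^v
        = ∑ i ∈ Finset.range (v+1), (v.choose i : ℝ) * (pois lam k * ((k:ℝ)-lam)^i) := by
      intro k
      have hb : (((k:ℝ)-lam)+1)^v
          = ∑ i ∈ Finset.range (v+1), ((k:ℝ)-lam)^i * (1:ℝ)^(v-i) * (v.choose i : ℝ) :=
        add_pow _ 1 v
      have he : ((k:ℝ)+1)-lam = ((k:ℝ)-lam)+1 := by ring
      rw [he, hb, Finset.mul_sum]
      exact Finset.sum_congr rfl fun i _ => by ring
    rw [tsum_congr h1, Summable.tsum_finsetSum (fun i _ => ((hs i).mul_left _))]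
    exact Finset.sum_congr rfl fun i _ => tsum_mul_left
  rw [shift, binom, Finset.sum_range_succ]
  simp only [Nat.choose_self, Nat.cast_one, one_mul]
  unfold poisCentralMoment
  ring

lemma moment_formula (lam : ℝ) (v : ℕ) :
    poisCentralMoment lam v = ∑ i ∈ Finset.range (v+1), (A v i : ℝ) * lam ^ i := by
  induction v using Nat.strong_induction_on with
  | _ v ih =>
    match v with
    | 0 =>
      have h0 : poisCentralMoment lam 0 = ∑' k : ℕ, pois lam k :=
        tsum_congr fun k => by simp
      rw [h0, tsum_pois]
      simp [A]
    | w+1 =>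
      rw [stein lam w]
      have h1 : ∑ j ∈ Finset.range w, (w.choose j : ℝ) * poisCentralMoment lam j
          = ∑ j ∈ Finset.range w, ∑ i ∈ Finset.range w,
              (w.choose j : ℝ) * ((A j i : ℝ) * lam ^ i) := by
        refine Finset.sum_congr rfl fun j hj => ?_
        have hjw := Finset.mem_range.mp hj
        rw [ih j (by omega), Finset.mul_sum]
        refine Finset.sum_subset (Finset.range_subset_range.mpr (by omega)) ?_
        intro i hi hni
        have hji : j < i := by
          simp only [Finset.mem_range] at hni
          omega
        rw [A_vanish' hji]
        simp
      rw [h1, Finset.sum_comm]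
      have h2 : ∀ i ∈ Finset.range w,
          ∑ j ∈ Finset.range w, (w.choose j : ℝ) * ((A j i : ℝ) * lam ^ i)
          = ((A (w+1) (i+1) : ℕ) : ℝ) * lam ^ i := by
        intro i _
        rw [← steinA w i]
        push_cast
        rw [Finset.sum_mul]
        exact Finset.sum_congr rfl fun j _ => by ring
      rw [Finset.sum_congr rfl h2]
      rw [Finset.sum_range_succ' (fun i => ((A (w+1) i : ℕ) : ℝ) * lam ^ i) (w+1), A_zero w]
      rw [Finset.sum_range_succ (fun i => ((A (w+1) (i+1) : ℕ) : ℝ) * lam ^ (i+1)) w]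
      have hz : A (w+1) (w+1) = 0 := A_vanish (w+1) (w+1) (by omega)
      rw [hz]
      simp only [Nat.cast_zero, zero_mul, add_zero, mul_zero]
      rw [Finset.mul_sum]
      exact Finset.sum_congr rfl fun i _ => by ring

/-- For every real `λ > 0` and every integer `v ≥ 2`, the central moments of the
Poisson(`λ`) distribution satisfy `μ_v(λ) ≤ μ_{v+1}(λ) ≤ (vλ + ⌊v/2⌋) μ_v(λ)`. -/
theorem poisson_central_moment_monotone (lam : ℝ) (hlam : 0 < lam) (v : ℕ) (hv : 2 ≤ v) :
    poisCentralMoment lam v ≤ poisCentralMoment lam (v + 1) ∧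
    poisCentralMoment lam (v + 1) ≤
      ((v : ℝ) * lam + ((v / 2 : ℕ) : ℝ)) * poisCentralMoment lam v := by
  have hA0 : A v 0 = 0 := by
    obtain ⟨k, rfl⟩ : ∃ k, v = k + 1 := ⟨v-1, by omega⟩
    exact A_zero k
  have key1 : poisCentralMoment lam v = ∑ i ∈ Finset.range (v+2), (A v i : ℝ) * lam ^ i := by
    rw [moment_formula lam v, Finset.sum_range_succ (fun i => ((A v i : ℕ) : ℝ) * lam ^ i) (v+1),
      A_vanish' (show v < v+1 by omega)]
    simp
  have key2 : poisCentralMoment lam (v+1)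
      = ∑ i ∈ Finset.range (v+2), (A (v+1) i : ℝ) * lam ^ i := moment_formula lam (v+1)
  constructor
  · rw [key1, key2]
    refine Finset.sum_le_sum fun i _ => ?_
    have hmono : (A v i : ℝ) ≤ (A (v+1) i : ℝ) :=
      Nat.cast_le.mpr (A_mono' (by omega) (by omega))
    exact mul_le_mul_of_nonneg_right hmono (by positivity)
  · rw [key2, Finset.sum_range_succ' (fun i => ((A (v+1) i : ℕ) : ℝ) * lam ^ i) (v+1),
      A_zero v]
    simp only [Nat.cast_zero, zero_mul, add_zero]
    have hbound : ∑ j ∈ Finset.range (v+1), ((A (v+1) (j+1) : ℕ) : ℝ) * lam ^ (j+1)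
        ≤ ∑ j ∈ Finset.range (v+1),
            (((v : ℝ) * (A v j : ℝ) + ((v/2 : ℕ) : ℝ) * (A v (j+1) : ℝ)) * lam ^ (j+1)) := by
      refine Finset.sum_le_sum fun j _ => ?_
      have hk : A (v+1) (j+1) ≤ v * A v j + (v/2) * A v (j+1) := by
        obtain ⟨m, rfl⟩ : ∃ m, v = m + 1 := ⟨v-1, by omega⟩
        exact A_key m j (by omega)
      have hcast : ((A (v+1) (j+1) : ℕ) : ℝ)
          ≤ (v : ℝ) * (A v j : ℝ) + ((v/2 : ℕ) : ℝ) * (A v (j+1) : ℝ) := by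
        calc ((A (v+1) (j+1) : ℕ) : ℝ)
            ≤ ((v * A v j + (v/2) * A v (j+1) : ℕ) : ℝ) := Nat.cast_le.mpr hk
          _ = _ := by push_cast; ring
      exact mul_le_mul_of_nonneg_right hcast (by positivity)
    refine hbound.trans (le_of_eq ?_)
    have e1 : ∑ j ∈ Finset.range (v+1), (A v j : ℝ) * lam ^ (j+1)
        = lam * poisCentralMoment lam v := by
      rw [moment_formula lam v, Finset.mul_sum]
      exact Finset.sum_congr rfl fun j _ => by ring
    have e2 : ∑ j ∈ Finset.range (v+1), (A v (j+1) : ℝ) * lam ^ (j+1)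
        = poisCentralMoment lam v := by
      rw [key1, Finset.sum_range_succ' (fun i => ((A v i : ℕ) : ℝ) * lam ^ i) (v+1), hA0]
      simp
    calc ∑ j ∈ Finset.range (v+1),
            (((v : ℝ) * (A v j : ℝ) + ((v/2 : ℕ) : ℝ) * (A v (j+1) : ℝ)) * lam ^ (j+1))
        = (v : ℝ) * ∑ j ∈ Finset.range (v+1), (A v j : ℝ) * lam ^ (j+1)
          + ((v/2 : ℕ) : ℝ) * ∑ j ∈ Finset.range (v+1), (A v (j+1) : ℝ) * lam ^ (j+1) := by
          rw [Finset.mul_sum, Finset.mul_sum, ← Finset.sum_add_distrib]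
          exact Finset.sum_congr rfl fun j _ => by ring
      _ = (v : ℝ) * (lam * poisCentralMoment lam v)
          + ((v/2 : ℕ) : ℝ) * poisCentralMoment lam v := by rw [e1, e2]
      _ = ((v : ℝ) * lam + ((v / 2 : ℕ) : ℝ)) * poisCentralMoment lam v := by ring
end
end

section
/- For every real λ > 0 and every even integer v ≥ 2, the central moments of the Poisson(λ) distribution satisfy (v+1)·λ·μ_v(λ) ≤ μ_{v+2}(λ) ≤ 2v(λ+v)·μ_v(λ). -/
noncomputable section

variable {lam : ℝ}

lemma pois_pos (hlam : 0 < lam) (k : ℕ) : 0 < pois lam k := by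
  unfold pois
  positivity

lemma pois_succ (k : ℕ) : ((k : ℝ) + 1) * pois lam (k + 1) = lam * pois lam k := by
  unfold pois
  rw [Nat.factorial_succ]
  push_cast
  have h : (0:ℝ) < (k : ℝ) + 1 := by positivity
  have h2 : (0:ℝ) < (Nat.factorial k : ℝ) := by positivity
  field_simp
  ring

/-- Master summability lemma. -/
lemma summable_master (hlam : 0 < lam) (n : ℕ) (f : ℕ → ℝ)
    (hf : ∀ k, |f k| ≤ ((k : ℝ) + lam + 1) ^ n) :
    Summable (fun k => pois lam k * f k) := by
  have key : ∀ k : ℕ, ‖pois lam k * f k‖ ≤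
      (Nat.factorial n * Real.exp 1) * ((Real.exp 1 * lam) ^ k / Nat.factorial k) := by
    intro k
    have hp := (pois_pos hlam k).le
    have h1 : ‖pois lam k * f k‖ = pois lam k * |f k| := by
      rw [norm_mul, Real.norm_eq_abs, Real.norm_eq_abs, abs_of_nonneg hp]
    rw [h1]
    have h2 : pois lam k * |f k| ≤ pois lam k * ((k : ℝ) + lam + 1) ^ n :=
      mul_le_mul_of_nonneg_left (hf k) hp
    refine h2.trans ?_
    have h3 : ((k : ℝ) + lam + 1) ^ n ≤ Nat.factorial n * Real.exp ((k : ℝ) + lam + 1) := by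
      have := Real.pow_div_factorial_le_exp (x := (k : ℝ) + lam + 1) (by positivity) n
      have hfn : (0:ℝ) < Nat.factorial n := by positivity
      calc ((k : ℝ) + lam + 1) ^ n
          = (Nat.factorial n) * (((k : ℝ) + lam + 1) ^ n / Nat.factorial n) := by field_simp
        _ ≤ Nat.factorial n * Real.exp ((k : ℝ) + lam + 1) := by
            exact mul_le_mul_of_nonneg_left this hfn.le
    calc pois lam k * ((k : ℝ) + lam + 1) ^ n
        ≤ pois lam k * (Nat.factorial n * Real.exp ((k : ℝ) + lam + 1)) :=
          mul_le_mul_of_nonneg_left h3 hp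
      _ = (Nat.factorial n * Real.exp 1) * ((Real.exp 1 * lam) ^ k / Nat.factorial k) := by
          unfold pois
          have hfk : (0:ℝ) < Nat.factorial k := by positivity
          rw [Real.exp_add, Real.exp_add, mul_pow, ← Real.exp_nat_mul,
            show ((k:ℕ):ℝ) * 1 = (k:ℝ) by ring, Real.exp_neg]
          have hel : Real.exp lam ≠ 0 := (Real.exp_pos lam).ne'
          field_simp
  refine Summable.of_norm (Summable.of_nonneg_of_le (fun k => norm_nonneg _) key ?_)
  exact (Real.summable_pow_div_factorial (Real.exp 1 * lam)).mul_left _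

lemma summable_A1 (hlam : 0 < lam) (n : ℕ) :
    Summable (fun k => pois lam k * ((k : ℝ) - lam) ^ n) := by
  refine summable_master hlam n _ (fun k => ?_)
  rw [abs_pow]
  refine pow_le_pow_left₀ (abs_nonneg _) ?_ n
  rw [abs_sub_comm, abs_sub_le_iff]
  constructor <;> [skip; skip] <;>
    · have : (0:ℝ) ≤ (k:ℝ) := Nat.cast_nonneg k
      linarith

lemma summable_A2 (hlam : 0 < lam) (n : ℕ) :
    Summable (fun k => pois lam k * ((k : ℝ) + 1 - lam) ^ n) := by
  refine summable_master hlam n _ (fun k => ?_)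
  rw [abs_pow]
  refine pow_le_pow_left₀ (abs_nonneg _) ?_ n
  rw [abs_sub_le_iff]
  constructor <;>
    · have : (0:ℝ) ≤ (k:ℝ) := Nat.cast_nonneg k
      linarith

lemma summable_A3 (hlam : 0 < lam) (n : ℕ) :
    Summable (fun k => pois lam k * ((k : ℝ) * ((k : ℝ) - lam) ^ n)) := by
  refine summable_master hlam (n + 1) _ (fun k => ?_)
  have hk : (0:ℝ) ≤ (k:ℝ) := Nat.cast_nonneg k
  rw [abs_mul, abs_pow, abs_of_nonneg hk, pow_succ']
  have h1 : (k:ℝ) ≤ (k:ℝ) + lam + 1 := by linarith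
  have h2 : |(k:ℝ) - lam| ≤ (k:ℝ) + lam + 1 := by
    rw [abs_sub_le_iff]; constructor <;> linarith
  exact mul_le_mul h1 (pow_le_pow_left₀ (abs_nonneg _) h2 n) (by positivity) (by linarith)

/-- Stein identity B. -/
lemma steinB (hlam : 0 < lam) (n : ℕ) :
    ∑' k : ℕ, pois lam k * ((k : ℝ) * ((k : ℝ) - lam) ^ n)
      = lam * ∑' k : ℕ, pois lam k * ((k : ℝ) + 1 - lam) ^ n := by
  rw [Summable.tsum_eq_zero_add (summable_A3 hlam n)]
  have h0 : pois lam 0 * ((0 : ℝ) * ((0 : ℝ) - lam) ^ n) = 0 := by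
    norm_num
  have hterm : ∀ k : ℕ, pois lam (k + 1) * (((k + 1 : ℕ) : ℝ) * (((k + 1 : ℕ) : ℝ) - lam) ^ n)
      = lam * (pois lam k * ((k : ℝ) + 1 - lam) ^ n) := by
    intro k
    have := pois_succ (lam := lam) k
    push_cast
    push_cast at this
    linear_combination (((k : ℝ) + 1 - lam) ^ n) * this
  simp only [Nat.cast_zero, h0, zero_add]
  calc ∑' k : ℕ, pois lam (k + 1) * (((k + 1 : ℕ) : ℝ) * (((k + 1 : ℕ) : ℝ) - lam) ^ n)
      = ∑' k : ℕ, lam * (pois lam k * ((k : ℝ) + 1 - lam) ^ n) := by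
        exact tsum_congr hterm
    _ = lam * ∑' k : ℕ, pois lam k * ((k : ℝ) + 1 - lam) ^ n := tsum_mul_left

/-- μ_{n+1} + λ μ_n = λ E[(X+1)^n]. -/
lemma moment_split (hlam : 0 < lam) (n : ℕ) :
    poisCentralMoment lam (n + 1) + lam * poisCentralMoment lam n
      = lam * ∑' k : ℕ, pois lam k * ((k : ℝ) + 1 - lam) ^ n := by
  rw [← steinB hlam n]
  unfold poisCentralMoment
  rw [← tsum_mul_left, ← Summable.tsum_add (summable_A1 hlam (n+1))
    ((summable_A1 hlam n).mul_left lam)]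
  refine tsum_congr fun k => ?_
  ring

/-- Expansion of E[(X+1)^n] into central moments. -/
lemma shift_expand (hlam : 0 < lam) (n : ℕ) :
    ∑' k : ℕ, pois lam k * ((k : ℝ) + 1 - lam) ^ n
      = ∑ j ∈ Finset.range (n + 1), (n.choose j : ℝ) * poisCentralMoment lam j := by
  have hptw : ∀ k : ℕ, pois lam k * ((k : ℝ) + 1 - lam) ^ n
      = ∑ j ∈ Finset.range (n + 1),
          (n.choose j : ℝ) * (pois lam k * ((k : ℝ) - lam) ^ j) := by
    intro k
    have hb : ((k : ℝ) + 1 - lam) = ((k : ℝ) - lam) + 1 := by ring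
    rw [hb, add_pow]
    rw [Finset.mul_sum]
    refine Finset.sum_congr rfl fun j hj => ?_
    ring
  rw [tsum_congr hptw, Summable.tsum_finsetSum (fun j hj => ((summable_A1 hlam j).mul_left _))]
  refine Finset.sum_congr rfl fun j hj => ?_
  rw [tsum_mul_left]
  rfl

/-- The central-moment recurrence. -/
lemma cm_rec (hlam : 0 < lam) (n : ℕ) :
    poisCentralMoment lam (n + 1)
      = lam * ∑ j ∈ Finset.range n, (n.choose j : ℝ) * poisCentralMoment lam j := by
  have h := moment_split hlam n
  rw [shift_expand hlam n, Finset.sum_range_succ, Nat.choose_self] at h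
  push_cast at h
  linarith [h]

lemma cm_nonneg (hlam : 0 < lam) : ∀ n : ℕ, 0 ≤ poisCentralMoment lam n := by
  intro n
  induction n using Nat.strong_induction_on with
  | _ n ih =>
    match n with
    | 0 =>
      refine tsum_nonneg fun k => ?_
      have := (pois_pos hlam k).le
      positivity
    | (m + 1) =>
      rw [cm_rec hlam m]
      refine mul_nonneg hlam.le (Finset.sum_nonneg fun j hj => ?_)
      exact mul_nonneg (Nat.cast_nonneg _) (ih j (Nat.lt_succ_of_lt (Finset.mem_range.mp hj)))

lemma term_bound {v i : ℕ} (hv : 0 < v) (hiv : i ≤ v) (hev : Even v) (x y : ℝ) :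
    x ^ i * y ^ (v - i) ≤ ((i : ℝ) * x ^ v + ((v : ℝ) - (i : ℝ)) * y ^ v) / (v : ℝ) := by
  have hx : x ^ i * y ^ (v - i) ≤ |x| ^ i * |y| ^ (v - i) := by
    calc x ^ i * y ^ (v - i) ≤ |x ^ i * y ^ (v - i)| := le_abs_self _
      _ = |x| ^ i * |y| ^ (v - i) := by rw [abs_mul, abs_pow, abs_pow]
  refine hx.trans ?_
  have ha : (0:ℝ) ≤ |x| := abs_nonneg x
  have hb : (0:ℝ) ≤ |y| := abs_nonneg y
  have hxa : x ^ v = |x| ^ v := (hev.pow_abs x).symm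
  have hyb : y ^ v = |y| ^ v := (hev.pow_abs y).symm
  rw [hxa, hyb]
  have hvR : (0:ℝ) < (v : ℝ) := by exact_mod_cast hv
  have hivR : (i : ℝ) ≤ (v : ℝ) := by exact_mod_cast hiv
  have w1 : (0:ℝ) ≤ (i : ℝ) / (v : ℝ) := by positivity
  have w2 : (0:ℝ) ≤ ((v : ℝ) - (i : ℝ)) / (v : ℝ) := by
    apply div_nonneg (by linarith) hvR.le
  have hw : (i : ℝ) / (v : ℝ) + ((v : ℝ) - (i : ℝ)) / (v : ℝ) = 1 := by field_simp; ring
  have key := Real.geom_mean_le_arith_mean2_weighted w1 w2 (pow_nonneg ha v) (pow_nonneg hb v) hw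
  have e1 : (|x| ^ v) ^ ((i : ℝ) / (v : ℝ)) = |x| ^ i := by
    rw [← Real.rpow_natCast |x| v, ← Real.rpow_mul ha,
      show (v : ℝ) * ((i : ℝ) / (v : ℝ)) = ((i : ℕ) : ℝ) by field_simp, Real.rpow_natCast]
  have e2 : (|y| ^ v) ^ (((v : ℝ) - (i : ℝ)) / (v : ℝ)) = |y| ^ (v - i) := by
    have hc : (v : ℝ) - (i : ℝ) = ((v - i : ℕ) : ℝ) := by
      rw [Nat.cast_sub hiv]
    rw [hc, ← Real.rpow_natCast |y| v, ← Real.rpow_mul hb,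
      show (v : ℝ) * (((v - i : ℕ) : ℝ) / (v : ℝ)) = ((v - i : ℕ) : ℝ) by field_simp,
      Real.rpow_natCast]
  rw [e1, e2] at key
  have e3 : (i : ℝ) / (v : ℝ) * |x| ^ v + ((v : ℝ) - (i : ℝ)) / (v : ℝ) * |y| ^ v
      = ((i : ℝ) * |x| ^ v + ((v : ℝ) - (i : ℝ)) * |y| ^ v) / (v : ℝ) := by ring
  linarith [key, e3.symm.le]

lemma sum_range_cast (n : ℕ) : ∑ i ∈ Finset.range (n + 1), (i : ℝ) = (n : ℝ) * ((n : ℝ) + 1) / 2 := by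
  induction n with
  | zero => simp
  | succ m ih => rw [Finset.sum_range_succ, ih]; push_cast; ring

/-- Trapezoid inequality. -/
lemma P1 {v : ℕ} (hv : 2 ≤ v) (hev : Even v) (x : ℝ) :
    (x + 1) ^ (v + 1) - x ^ (v + 1) ≤ ((v : ℝ) + 1) / 2 * (x ^ v + (x + 1) ^ v) := by
  have hg := geom_sum₂_mul (x + 1) x (v + 1)
  have h1 : (x + 1) - x = 1 := by ring
  rw [h1, mul_one] at hg
  simp only [Nat.add_sub_cancel] at hg
  rw [← hg]
  have hv0 : (v : ℝ) ≠ 0 := by positivity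
  calc ∑ i ∈ Finset.range (v + 1), (x + 1) ^ i * x ^ (v - i)
      ≤ ∑ i ∈ Finset.range (v + 1),
          ((i : ℝ) * (x + 1) ^ v + ((v : ℝ) - (i : ℝ)) * x ^ v) / (v : ℝ) := by
        refine Finset.sum_le_sum fun i hi => ?_
        exact term_bound (by omega) (Nat.lt_succ_iff.mp (Finset.mem_range.mp hi)) hev _ _
    _ = (∑ i ∈ Finset.range (v + 1), (i : ℝ)) * (((x + 1) ^ v - x ^ v) / (v : ℝ))
          + ((v : ℝ) + 1) * x ^ v := by
        rw [Finset.sum_congr rfl (fun i _ => by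
          field_simp
          ring : ∀ i ∈ Finset.range (v + 1),
            ((i : ℝ) * (x + 1) ^ v + ((v : ℝ) - (i : ℝ)) * x ^ v) / (v : ℝ)
              = (i : ℝ) * (((x + 1) ^ v - x ^ v) / (v : ℝ)) + x ^ v),
          Finset.sum_add_distrib, ← Finset.sum_mul, Finset.sum_const, Finset.card_range]
        push_cast
        ring
    _ = ((v : ℝ) + 1) / 2 * (x ^ v + (x + 1) ^ v) := by
        rw [sum_range_cast]
        field_simp
        ring

/-- Quadratic AM-GM pointwise bound. -/
lemma P2 {v : ℕ} (hev : Even v) (x t : ℝ) (ht : 0 < t) :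
    x ^ (v + 1) ≤ (t * x ^ v + x ^ (v + 2) / t) / 2 := by
  have h1 : 0 ≤ (x - t) ^ 2 * x ^ v := mul_nonneg (sq_nonneg _) (hev.pow_nonneg x)
  have expand : (x - t) ^ 2 * x ^ v = x ^ (v + 2) - 2 * t * x ^ (v + 1) + t ^ 2 * x ^ v := by
    ring
  rw [expand] at h1
  rw [le_div_iff₀ (by norm_num : (0:ℝ) < 2),
    show t * x ^ v + x ^ (v + 2) / t = (t ^ 2 * x ^ v + x ^ (v + 2)) / t by field_simp,
    le_div_iff₀ ht]
  nlinarith [h1]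

/-- For every real `λ > 0` and every even integer `v ≥ 2`, the central moments of the
Poisson(`λ`) distribution satisfy `(v+1) λ μ_v(λ) ≤ μ_{v+2}(λ) ≤ 2v(λ+v) μ_v(λ)`. -/
theorem poisson_central_moment_two_step (lam : ℝ) (hlam : 0 < lam)
    (v : ℕ) (hv : 2 ≤ v) (hev : Even v) :
    ((v : ℝ) + 1) * lam * poisCentralMoment lam v ≤ poisCentralMoment lam (v + 2) ∧
    poisCentralMoment lam (v + 2) ≤
      2 * (v : ℝ) * (lam + (v : ℝ)) * poisCentralMoment lam v := by
  have hA : 0 ≤ poisCentralMoment lam v := cm_nonneg hlam v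
  have hB : 0 ≤ poisCentralMoment lam (v + 1) := cm_nonneg hlam (v + 1)
  have hV : (2:ℝ) ≤ (v : ℝ) := by exact_mod_cast hv
  constructor
  · -- lower bound
    have hrec := cm_rec hlam (v + 1)
    have he : v + 1 + 1 = v + 2 := rfl
    rw [he] at hrec
    have hsingle : ((v + 1).choose v : ℝ) * poisCentralMoment lam v
        ≤ ∑ j ∈ Finset.range (v + 1), ((v + 1).choose j : ℝ) * poisCentralMoment lam j := by
      refine Finset.single_le_sum (f := fun j => ((v + 1).choose j : ℝ) * poisCentralMoment lam j)
        (fun j _ => mul_nonneg (Nat.cast_nonneg _) (cm_nonneg hlam j)) ?_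
      exact Finset.self_mem_range_succ v
    rw [Nat.choose_succ_self_right] at hsingle
    push_cast at hsingle
    have := mul_le_mul_of_nonneg_left hsingle hlam.le
    rw [hrec]
    nlinarith [this]
  · -- upper bound
    set V : ℝ := (v : ℝ) with hVdef
    have hV1 : (0:ℝ) < V + 1 := by linarith
    -- h1 : μ(v+2) + lam μ(v+1) = lam * T1
    have h1 := moment_split hlam (v + 1)
    have he : v + 1 + 1 = v + 2 := rfl
    rw [he] at h1
    -- h2 : μ(v+1) + lam μ v = lam * T2
    have h2 := moment_split hlam v
    -- h3 : T1 - μ(v+1) ≤ (V+1)/2 * (μ v + T2)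
    have h3 : (∑' k : ℕ, pois lam k * ((k : ℝ) + 1 - lam) ^ (v + 1))
        - poisCentralMoment lam (v + 1)
        ≤ (V + 1) / 2 * (poisCentralMoment lam v
            + ∑' k : ℕ, pois lam k * ((k : ℝ) + 1 - lam) ^ v) := by
      have hsub : (∑' k : ℕ, pois lam k * ((k : ℝ) + 1 - lam) ^ (v + 1))
          - poisCentralMoment lam (v + 1)
          = ∑' k : ℕ, (pois lam k * ((k : ℝ) + 1 - lam) ^ (v + 1)
              - pois lam k * ((k : ℝ) - lam) ^ (v + 1)) :=
        (Summable.tsum_sub (summable_A2 hlam (v + 1)) (summable_A1 hlam (v + 1))).symm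
      rw [hsub]
      have hle : ∀ k : ℕ, pois lam k * ((k : ℝ) + 1 - lam) ^ (v + 1)
          - pois lam k * ((k : ℝ) - lam) ^ (v + 1)
          ≤ (V + 1) / 2 * (pois lam k * ((k : ℝ) - lam) ^ v
              + pois lam k * ((k : ℝ) + 1 - lam) ^ v) := by
        intro k
        have hp := (pois_pos hlam k).le
        have hpt := P1 hv hev ((k : ℝ) - lam)
        have hx : ((k : ℝ) - lam) + 1 = (k : ℝ) + 1 - lam := by ring
        rw [hx] at hpt
        have := mul_le_mul_of_nonneg_left hpt hp
        nlinarith [this]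
      calc ∑' k : ℕ, (pois lam k * ((k : ℝ) + 1 - lam) ^ (v + 1)
              - pois lam k * ((k : ℝ) - lam) ^ (v + 1))
          ≤ ∑' k : ℕ, (V + 1) / 2 * (pois lam k * ((k : ℝ) - lam) ^ v
              + pois lam k * ((k : ℝ) + 1 - lam) ^ v) :=
            Summable.tsum_le_tsum hle
              ((summable_A2 hlam (v + 1)).sub (summable_A1 hlam (v + 1)))
              (((summable_A1 hlam v).add (summable_A2 hlam v)).mul_left _)
        _ = (V + 1) / 2 * (poisCentralMoment lam v
              + ∑' k : ℕ, pois lam k * ((k : ℝ) + 1 - lam) ^ v) := by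
            rw [tsum_mul_left, Summable.tsum_add (summable_A1 hlam v) (summable_A2 hlam v)]
            rfl
    -- h4 : μ(v+1) ≤ (V+1)/2 * μ v + 1/(2(V+1)) * μ(v+2)
    have h4 : poisCentralMoment lam (v + 1)
        ≤ (V + 1) / 2 * poisCentralMoment lam v
          + 1 / (2 * (V + 1)) * poisCentralMoment lam (v + 2) := by
      have hle : ∀ k : ℕ, pois lam k * ((k : ℝ) - lam) ^ (v + 1)
          ≤ (V + 1) / 2 * (pois lam k * ((k : ℝ) - lam) ^ v)
            + 1 / (2 * (V + 1)) * (pois lam k * ((k : ℝ) - lam) ^ (v + 2)) := by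
        intro k
        have hp := (pois_pos hlam k).le
        have hpt := P2 hev ((k : ℝ) - lam) (V + 1) hV1
        have := mul_le_mul_of_nonneg_left hpt hp
        calc pois lam k * ((k : ℝ) - lam) ^ (v + 1)
            ≤ pois lam k * (((V + 1) * ((k : ℝ) - lam) ^ v
                + ((k : ℝ) - lam) ^ (v + 2) / (V + 1)) / 2) := this
          _ = (V + 1) / 2 * (pois lam k * ((k : ℝ) - lam) ^ v)
                + 1 / (2 * (V + 1)) * (pois lam k * ((k : ℝ) - lam) ^ (v + 2)) := by
              field_simp
      calc poisCentralMoment lam (v + 1)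
          ≤ ∑' k : ℕ, ((V + 1) / 2 * (pois lam k * ((k : ℝ) - lam) ^ v)
              + 1 / (2 * (V + 1)) * (pois lam k * ((k : ℝ) - lam) ^ (v + 2))) :=
            Summable.tsum_le_tsum hle (summable_A1 hlam (v + 1))
              (((summable_A1 hlam v).mul_left _).add ((summable_A1 hlam (v + 2)).mul_left _))
        _ = (V + 1) / 2 * poisCentralMoment lam v
              + 1 / (2 * (V + 1)) * poisCentralMoment lam (v + 2) := by
            rw [Summable.tsum_add ((summable_A1 hlam v).mul_left _)
              ((summable_A1 hlam (v + 2)).mul_left _), tsum_mul_left, tsum_mul_left]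
            rfl
    -- combine
    have h3' := mul_le_mul_of_nonneg_left h3 hlam.le
    have h4' : 2 * (V + 1) * poisCentralMoment lam (v + 1)
        ≤ (V + 1) ^ 2 * poisCentralMoment lam v + poisCentralMoment lam (v + 2) := by
      have h := mul_le_mul_of_nonneg_left h4 (by positivity : (0:ℝ) ≤ 2 * (V + 1))
      have e : 2 * (V + 1) * ((V + 1) / 2 * poisCentralMoment lam v
          + 1 / (2 * (V + 1)) * poisCentralMoment lam (v + 2))
          = (V + 1) ^ 2 * poisCentralMoment lam v + poisCentralMoment lam (v + 2) := by
        field_simp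
      linarith [h, e.le]
    nlinarith [h1, h2, h3', h4', hA, hB, hlam,
      mul_nonneg (mul_nonneg (sub_nonneg.mpr hV) hlam.le) hA,
      mul_nonneg (mul_nonneg (sub_nonneg.mpr hV) (by linarith : (0:ℝ) ≤ V)) hA,
      mul_nonneg hlam.le hA]
end
end

section
/- Fix n ≥ 1, N > 1 and the multinomial model M(n,N,P), and let s be a nonnegative integer such that E|h_m(ξ_m)|^s < ∞ for every m. Set T_N = Σ_{m=1}^N h_m(ξ_m) and S_N = Σ_{m=1}^N (ξ_m − n p_m). Then E[R_N(η)^s] = ν_n ∫_{−π√n}^{π√n} E[ T_N^s · exp{ iτ S_N/√n } ] dτ, where ν_n = (2π√n · P{S_N = 0})^{−1} = n! e^n / (2π n^n √n). -/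
open Filter MeasureTheory Asymptotics

noncomputable section

/-- Expectation `E f(ξ)` for `ξ ~ Poisson(lam)`. -/
def pE (lam : ℝ) (f : ℕ → ℝ) : ℝ := ∑' k : ℕ, pois lam k * f k

/-- Variance `Var f(ξ)` for `ξ ~ Poisson(lam)`. -/
def pVar (lam : ℝ) (f : ℕ → ℝ) : ℝ := pE lam (fun k => (f k - pE lam f) ^ 2)

/-- Covariance `Cov(f(ξ), ξ)` for `ξ ~ Poisson(lam)`. -/
def pCov (lam : ℝ) (f : ℕ → ℝ) : ℝ :=
  pE lam (fun k => (f k - pE lam f) * ((k : ℝ) - lam))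

/-- Expectation of `g(η)` under the multinomial distribution `M(n, N, p)`:
the sum over all frequency vectors `m` with `m_1 + ⋯ + m_N = n` of
`n!/(m_1! ⋯ m_N!) p_1^{m_1} ⋯ p_N^{m_N} · g(m)`. -/
def mExp (n N : ℕ) (p : Fin N → ℝ) (g : (Fin N → ℕ) → ℝ) : ℝ :=
  ∑ m ∈ Finset.Nat.antidiagonalTuple N n,
    ((Nat.factorial n : ℝ) * ∏ j, p j ^ (m j) / (Nat.factorial (m j) : ℝ)) * g m

open Classical in
/-- Probability of an event under the multinomial distribution `M(n, N, p)`. -/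
def mProb (n N : ℕ) (p : Fin N → ℝ) (E : (Fin N → ℕ) → Prop) : ℝ :=
  mExp n N p (fun m => if E m then 1 else 0)

/-- The statistic `R_N(η) = ∑_{j=1}^N h_j(η_j)`. -/
def RNval {N : ℕ} (h : Fin N → ℕ → ℝ) (m : Fin N → ℕ) : ℝ := ∑ j, h j (m j)

/-- `A_N = ∑_j E h_j(ξ_j)` with `ξ_j ~ Poisson(n p_j)`. -/
def AN (n N : ℕ) (p : Fin N → ℝ) (h : Fin N → ℕ → ℝ) : ℝ := ∑ j, pE (n * p j) (h j)

/-- `τ_n = n⁻¹ ∑_j Cov(h_j(ξ_j), ξ_j)`. -/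
def tauN (n N : ℕ) (p : Fin N → ℝ) (h : Fin N → ℕ → ℝ) : ℝ :=
  (n : ℝ)⁻¹ * ∑ j, pCov (n * p j) (h j)

/-- `σ̃_N² = ∑_j Var h_j(ξ_j)`. -/
def sigTilde2 (n N : ℕ) (p : Fin N → ℝ) (h : Fin N → ℕ → ℝ) : ℝ :=
  ∑ j, pVar (n * p j) (h j)

/-- `σ_N² = σ̃_N² − n τ_n²`. -/
def sig2 (n N : ℕ) (p : Fin N → ℝ) (h : Fin N → ℕ → ℝ) : ℝ :=
  sigTilde2 n N p h - n * (tauN n N p h) ^ 2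

/-- The standard normal cumulative distribution function `Φ`. -/
def stdCDF (x : ℝ) : ℝ :=
  ∫ t in Set.Iic x, Real.exp (-t ^ 2 / 2) / Real.sqrt (2 * Real.pi)

/-- `p_max = max_j p_j`. -/
def pmax {N : ℕ} (p : Fin N → ℝ) : ℝ := ⨆ j, p j

/-- `p_min = min_j p_j`. -/
def pmin {N : ℕ} (p : Fin N → ℝ) : ℝ := ⨅ j, p j

/-- The `k`-th cumulant of a random variable with raw moments `α`, via the classical
moment–cumulant formula
`C_k = k! Σ (−1)^{m_1+⋯+m_k−1}(m_1+⋯+m_k−1)! ∏_{l=1}^k (α_l/l!)^{m_l}/m_l!`,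
the sum over nonnegative integers `m_1, …, m_k` with `m_1 + 2m_2 + ⋯ + k m_k = k`. -/
def cumul (α : ℕ → ℝ) (k : ℕ) : ℝ :=
  ∑ m ∈ (Finset.Icc 1 k).pi (fun _ => Finset.range (k + 1)),
    if (∑ l ∈ (Finset.Icc 1 k).attach, l.1 * m l.1 l.2) = k then
      (Nat.factorial k : ℝ) *
        (-1) ^ ((∑ l ∈ (Finset.Icc 1 k).attach, m l.1 l.2) - 1) *
        (Nat.factorial ((∑ l ∈ (Finset.Icc 1 k).attach, m l.1 l.2) - 1) : ℝ) *
        ∏ l ∈ (Finset.Icc 1 k).attach,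
          (α l.1 / (Nat.factorial l.1 : ℝ)) ^ (m l.1 l.2) / (Nat.factorial (m l.1 l.2) : ℝ)
    else 0

lemma pois_nonneg {lam : ℝ} (h : 0 ≤ lam) (k : ℕ) : 0 ≤ pois lam k := by
  unfold pois
  positivity

lemma summable_pois_s4 (lam : ℝ) : Summable (pois lam) := by
  have := (Real.summable_pow_div_factorial lam).mul_left (Real.exp (-lam))
  refine this.congr fun k => ?_
  unfold pois
  ring

lemma summable_pi_prod : ∀ (N : ℕ) (f : Fin N → ℕ → ℝ), (∀ j k, 0 ≤ f j k) →
    (∀ j, Summable (f j)) → Summable (fun k : Fin N → ℕ => ∏ j, f j (k j)) := by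
  intro N
  induction N with
  | zero => intro f _ _; simp only [Finset.univ_eq_empty, Finset.prod_empty]
            exact summable_of_finite_support (Set.toFinite _)
  | succ N ih =>
    intro f h0 hf
    have key : Summable (fun x : ℕ × (Fin N → ℕ) => f 0 x.1 * ∏ j : Fin N, f j.succ (x.2 j)) := by
      apply Summable.mul_of_nonneg (hf 0)
        (ih (fun j => f j.succ) (fun j k => h0 _ _) (fun j => hf j.succ))
      · exact fun k => h0 0 k
      · exact fun k => Finset.prod_nonneg fun j _ => h0 _ _
    set e := Fin.consEquiv (fun _ : Fin (N+1) => ℕ) with he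
    have hFe : (fun x : ℕ × (Fin N → ℕ) => f 0 x.1 * ∏ j : Fin N, f j.succ (x.2 j))
        = (fun k : Fin N.succ → ℕ => ∏ j, f j (k j)) ∘ e := by
      funext x
      simp only [Function.comp_apply, he, Fin.consEquiv_apply, Fin.prod_univ_succ,
        Fin.cons_zero, Fin.cons_succ]
    rw [hFe] at key
    exact e.summable_iff.mp key

lemma pow_sum_le {N s : ℕ} (a : Fin N → ℝ) (ha : ∀ j, 0 ≤ a j) (hN : 0 < N) :
    (∑ j, a j) ^ s ≤ (N : ℝ) ^ s * ∑ j, a j ^ s := by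
  obtain ⟨j0, -, hj0⟩ := Finset.exists_max_image Finset.univ a ⟨⟨0, hN⟩, Finset.mem_univ _⟩
  calc (∑ j, a j) ^ s ≤ ((N : ℝ) * a j0) ^ s := by
        apply pow_le_pow_left₀ (Finset.sum_nonneg fun j _ => ha j)
        calc ∑ j, a j ≤ ∑ _j : Fin N, a j0 := Finset.sum_le_sum fun j _ => hj0 j (Finset.mem_univ j)
          _ = (N : ℝ) * a j0 := by simp [mul_comm]
    _ = (N : ℝ) ^ s * a j0 ^ s := mul_pow _ _ _
    _ ≤ (N : ℝ) ^ s * ∑ j, a j ^ s := by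
        apply mul_le_mul_of_nonneg_left _ (by positivity)
        exact Finset.single_le_sum (fun j _ => pow_nonneg (ha j) s) (Finset.mem_univ j0)

lemma antidiagonalTuple_eq_piAntidiag (N n : ℕ) :
    Finset.Nat.antidiagonalTuple N n = Finset.piAntidiag Finset.univ n := by
  ext k
  simp [Finset.Nat.mem_antidiagonalTuple, Finset.mem_piAntidiag]

lemma sum_prod_pow_div_factorial {N n : ℕ} (x : Fin N → ℝ) :
    ∑ k ∈ Finset.Nat.antidiagonalTuple N n, ∏ j, x j ^ k j / (Nat.factorial (k j) : ℝ)
      = (∑ j, x j) ^ n / (Nat.factorial n : ℝ) := by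
  rw [eq_div_iff (by exact_mod_cast (Nat.factorial_pos n).ne')]
  rw [Finset.sum_pow_eq_sum_piAntidiag, antidiagonalTuple_eq_piAntidiag, Finset.sum_mul]
  refine Finset.sum_congr rfl fun k hk => ?_
  rw [Finset.mem_piAntidiag] at hk
  have hspec := Nat.multinomial_spec Finset.univ k
  rw [hk.1] at hspec
  rw [Finset.prod_div_distrib]
  have hne : (∏ i, (Nat.factorial (k i) : ℝ)) ≠ 0 := by positivity
  field_simp
  rw [← hspec]
  push_cast
  ring

lemma prod_pois_eq {N n : ℕ} (p : Fin N → ℝ) (hps : ∑ j, p j = 1) (k : Fin N → ℕ) :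
    ∏ j, pois ((n : ℝ) * p j) (k j)
      = Real.exp (-(n : ℝ)) * (n : ℝ) ^ (∑ j, k j) *
          ∏ j, p j ^ k j / (Nat.factorial (k j) : ℝ) := by
  have h1 : ∏ j, Real.exp (-((n : ℝ) * p j)) = Real.exp (-(n : ℝ)) := by
    rw [← Real.exp_sum]
    congr 1
    rw [Finset.sum_neg_distrib, ← Finset.mul_sum, hps, mul_one]
  have h2 : ∏ j, ((n : ℝ) * p j) ^ (k j) = (n : ℝ) ^ (∑ j, k j) * ∏ j, p j ^ k j := by
    simp_rw [mul_pow]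
    rw [Finset.prod_mul_distrib, Finset.prod_pow_eq_pow_sum]
  simp only [pois]
  rw [Finset.prod_div_distrib, Finset.prod_mul_distrib, h1, h2, Finset.prod_div_distrib]
  ring


set_option maxHeartbeats 1000000 in
/-- **Lemma 5.1.**  Fix `n ≥ 1`, `N > 1` and the multinomial model `M(n, N, p)`, and let
`s` be a nonnegative integer such that `E|h_m(ξ_m)|^s < ∞` for every `m`.  With
`T_N = Σ_m h_m(ξ_m)` and `S_N = Σ_m (ξ_m − n p_m)` (the `ξ_m` independent Poisson(`n p_m`)),
`E[R_N(η)^s] = ν_n ∫_{−π√n}^{π√n} E[T_N^s exp{iτ S_N/√n}] dτ`, where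
`ν_n = (2π√n P{S_N = 0})⁻¹ = n! eⁿ/(2π nⁿ √n)`. -/
theorem multinomial_moment_integral_representation
    (n N : ℕ) (hn : 1 ≤ n) (hN : 1 < N)
    (p : Fin N → ℝ) (hp : ∀ j, 0 < p j) (hps : ∑ j, p j = 1)
    (h : Fin N → ℕ → ℝ) (s : ℕ)
    (hint : ∀ j, Summable (fun k : ℕ => pois ((n : ℝ) * p j) k * |h j k| ^ s)) :
    ((mExp n N p (fun m => (RNval h m) ^ s) : ℝ) : ℂ) =
      (((Nat.factorial n : ℝ) * Real.exp n /
          (2 * Real.pi * (n : ℝ) ^ n * Real.sqrt n) : ℝ) : ℂ) *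
        ∫ τ in (-(Real.pi * Real.sqrt n))..(Real.pi * Real.sqrt n),
          ∑' k : Fin N → ℕ,
            ((∏ j, pois ((n : ℝ) * p j) (k j) : ℝ) : ℂ) *
              (((∑ j, h j (k j)) ^ s : ℝ) : ℂ) *
              Complex.exp (Complex.I * (τ : ℂ) *
                (((∑ j, ((k j : ℝ) - (n : ℝ) * p j)) : ℝ) : ℂ) / ((Real.sqrt n : ℝ) : ℂ)) ∧
    (Nat.factorial n : ℝ) * Real.exp n / (2 * Real.pi * (n : ℝ) ^ n * Real.sqrt n) =
      (2 * Real.pi * Real.sqrt n *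
        ∑' k : Fin N → ℕ, (∏ j, pois ((n : ℝ) * p j) (k j)) *
          (if (∑ j, ((k j : ℝ) - (n : ℝ) * p j)) = 0 then 1 else 0))⁻¹ := by
  have hn0 : (0:ℝ) < (n:ℝ) := by exact_mod_cast hn
  have hr : 0 < Real.sqrt (n:ℝ) := Real.sqrt_pos.mpr hn0
  have hπ := Real.pi_pos
  set r := Real.sqrt (n:ℝ) with hrdef
  have hnp : ∀ j, 0 ≤ (n:ℝ) * p j := fun j => mul_nonneg hn0.le (hp j).le
  have hsum_np : ∑ j, (n:ℝ) * p j = (n:ℝ) := by rw [← Finset.mul_sum, hps, mul_one]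
  have hd : ∀ k : Fin N → ℕ, (∑ j, ((k j : ℝ) - (n:ℝ) * p j)) = ((∑ j, k j : ℕ) : ℝ) - (n:ℝ) := by
    intro k
    rw [Finset.sum_sub_distrib, hsum_np]
    push_cast
    ring
  have hd0 : ∀ k : Fin N → ℕ, ((∑ j, ((k j : ℝ) - (n:ℝ) * p j)) = 0 ↔ (∑ j, k j) = n) := by
    intro k
    rw [hd k, sub_eq_zero]
    exact_mod_cast Iff.rfl
  have hgnn : ∀ k : Fin N → ℕ, 0 ≤ (∏ j, pois ((n:ℝ) * p j) (k j)) * |∑ j, h j (k j)| ^ s :=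
    fun k => mul_nonneg (Finset.prod_nonneg fun j _ => pois_nonneg (hnp j) _)
      (pow_nonneg (abs_nonneg _) s)
  have hgsum : Summable (fun k : Fin N → ℕ =>
      (∏ j, pois ((n:ℝ) * p j) (k j)) * |∑ j, h j (k j)| ^ s) := by
    set F : Fin N → Fin N → ℕ → ℝ :=
      fun j0 j m => pois ((n:ℝ) * p j) m * (if j = j0 then |h j m| ^ s else 1) with hF
    have hFnn : ∀ j0 j m, 0 ≤ F j0 j m := by
      intro j0 j m
      apply mul_nonneg (pois_nonneg (hnp j) m)
      split <;> positivity
    have hFsum : ∀ j0 j, Summable (F j0 j) := by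
      intro j0 j
      by_cases hj : j = j0
      · subst hj; simpa only [hF, if_pos rfl, if_true] using hint j
      · simpa only [hF, if_neg hj, mul_one] using summable_pois_s4 ((n:ℝ) * p j)
    have hprodF : ∀ (j0 : Fin N) (k : Fin N → ℕ), ∏ j, F j0 j (k j)
        = (∏ j, pois ((n:ℝ) * p j) (k j)) * |h j0 (k j0)| ^ s := by
      intro j0 k
      simp only [hF]
      rw [Finset.prod_mul_distrib, Fintype.prod_ite_eq']
    refine Summable.of_nonneg_of_le hgnn (fun k => ?_)
      (summable_sum (s := Finset.univ)
        (f := fun (j0 : Fin N) (k : Fin N → ℕ) => (N:ℝ)^s * ∏ j, F j0 j (k j))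
        (fun j0 _ => ((summable_pi_prod N (F j0) (hFnn j0) (hFsum j0)).mul_left ((N:ℝ)^s))))
    calc (∏ j, pois ((n:ℝ)*p j) (k j)) * |∑ j, h j (k j)| ^ s
        ≤ (∏ j, pois ((n:ℝ)*p j) (k j)) * ((N:ℝ)^s * ∑ j0, |h j0 (k j0)| ^ s) := by
          apply mul_le_mul_of_nonneg_left _
            (Finset.prod_nonneg fun j _ => pois_nonneg (hnp j) _)
          calc |∑ j, h j (k j)| ^ s ≤ (∑ j, |h j (k j)|) ^ s :=
                pow_le_pow_left₀ (abs_nonneg _) (Finset.abs_sum_le_sum_abs _ _) s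
            _ ≤ (N:ℝ)^s * ∑ j0, |h j0 (k j0)| ^ s :=
                pow_sum_le _ (fun j => abs_nonneg _) (by omega)
      _ = ∑ j0, (N:ℝ)^s * ∏ j, F j0 j (k j) := by
          simp only [hprodF, Finset.mul_sum]
          exact Finset.sum_congr rfl fun j0 _ => by ring
  have hts : (∑' k : Fin N → ℕ, (∏ j, pois ((n:ℝ) * p j) (k j)) *
      (if (∑ j, ((k j : ℝ) - (n:ℝ) * p j)) = 0 then 1 else 0))
      = Real.exp (-(n:ℝ)) * (n:ℝ) ^ n / (Nat.factorial n : ℝ) := by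
    rw [tsum_eq_sum (s := Finset.Nat.antidiagonalTuple N n) (fun k hk => ?_)]
    · have hcg : ∀ k ∈ Finset.Nat.antidiagonalTuple N n,
          (∏ j, pois ((n:ℝ) * p j) (k j)) *
            (if (∑ j, ((k j : ℝ) - (n:ℝ) * p j)) = 0 then 1 else 0)
          = Real.exp (-(n:ℝ)) * (n:ℝ) ^ n * ∏ j, p j ^ k j / (Nat.factorial (k j) : ℝ) := by
        intro k hk
        have hks : ∑ j, k j = n := Finset.Nat.mem_antidiagonalTuple.mp hk
        rw [if_pos ((hd0 k).mpr hks), mul_one, prod_pois_eq p hps k, hks]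
      rw [Finset.sum_congr rfl hcg, ← Finset.mul_sum, sum_prod_pow_div_factorial, hps, one_pow]
      ring
    · rw [if_neg, mul_zero]
      rw [hd0]
      exact fun hc => hk (Finset.Nat.mem_antidiagonalTuple.mpr hc)
  have hle : -(Real.pi * r) ≤ Real.pi * r := by nlinarith
  refine ⟨?_, ?_⟩
  · -- Part 1
    have hcont : ∀ k : Fin N → ℕ, Continuous (fun τ : ℝ =>
        ((∏ j, pois ((n:ℝ) * p j) (k j) : ℝ) : ℂ) * (((∑ j, h j (k j)) ^ s : ℝ) : ℂ) *
          Complex.exp (Complex.I * (τ:ℂ) *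
            (((∑ j, ((k j:ℝ) - (n:ℝ)*p j)) : ℝ) : ℂ) / ((r:ℝ):ℂ))) := by
      intro k
      exact continuous_const.mul
        ((((continuous_const.mul Complex.continuous_ofReal).mul continuous_const).div_const
          _).cexp)
    have hnrm : ∀ (k : Fin N → ℕ) (τ : ℝ),
        ‖((∏ j, pois ((n:ℝ) * p j) (k j) : ℝ) : ℂ) * (((∑ j, h j (k j)) ^ s : ℝ) : ℂ) *
          Complex.exp (Complex.I * (τ:ℂ) *
            (((∑ j, ((k j:ℝ) - (n:ℝ)*p j)) : ℝ) : ℂ) / ((r:ℝ):ℂ))‖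
        = (∏ j, pois ((n:ℝ) * p j) (k j)) * |∑ j, h j (k j)| ^ s := by
      intro k τ
      have harg : Complex.I * (τ:ℂ) * (((∑ j, ((k j:ℝ) - (n:ℝ)*p j)) : ℝ) : ℂ) / ((r:ℝ):ℂ)
          = ((τ * (∑ j, ((k j:ℝ) - (n:ℝ)*p j)) / r : ℝ) : ℂ) * Complex.I := by
        push_cast; ring
      rw [norm_mul, norm_mul, harg, Complex.norm_exp_ofReal_mul_I, mul_one, Complex.norm_real,
        Complex.norm_real, Real.norm_eq_abs, Real.norm_eq_abs,
        abs_of_nonneg (Finset.prod_nonneg fun j _ => pois_nonneg (hnp j) _), abs_pow]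
    have hfin : (∑' k : Fin N → ℕ, ∫⁻ τ in Set.Ioc (-(Real.pi * r)) (Real.pi * r),
        (‖((∏ j, pois ((n:ℝ) * p j) (k j) : ℝ) : ℂ) * (((∑ j, h j (k j)) ^ s : ℝ) : ℂ) *
          Complex.exp (Complex.I * (τ:ℂ) *
            (((∑ j, ((k j:ℝ) - (n:ℝ)*p j)) : ℝ) : ℂ) / ((r:ℝ):ℂ))‖₊ : ENNReal)) ≠ ⊤ := by
      have h1 : ∀ k : Fin N → ℕ, (∫⁻ τ in Set.Ioc (-(Real.pi * r)) (Real.pi * r),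
          (‖((∏ j, pois ((n:ℝ) * p j) (k j) : ℝ) : ℂ) * (((∑ j, h j (k j)) ^ s : ℝ) : ℂ) *
            Complex.exp (Complex.I * (τ:ℂ) *
              (((∑ j, ((k j:ℝ) - (n:ℝ)*p j)) : ℝ) : ℂ) / ((r:ℝ):ℂ))‖₊ : ENNReal))
          = ENNReal.ofReal ((∏ j, pois ((n:ℝ) * p j) (k j)) * |∑ j, h j (k j)| ^ s) *
              volume (Set.Ioc (-(Real.pi * r)) (Real.pi * r)) := by
        intro k
        have h2 : (fun τ : ℝ =>
            (‖((∏ j, pois ((n:ℝ) * p j) (k j) : ℝ) : ℂ) * (((∑ j, h j (k j)) ^ s : ℝ) : ℂ) *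
              Complex.exp (Complex.I * (τ:ℂ) *
                (((∑ j, ((k j:ℝ) - (n:ℝ)*p j)) : ℝ) : ℂ) / ((r:ℝ):ℂ))‖₊ : ENNReal))
            = fun _ : ℝ => ENNReal.ofReal
                ((∏ j, pois ((n:ℝ) * p j) (k j)) * |∑ j, h j (k j)| ^ s) := by
          funext τ
          rw [← enorm_eq_nnnorm, ← ofReal_norm, hnrm k τ]
        rw [h2, MeasureTheory.setLIntegral_const]
      rw [tsum_congr h1, ENNReal.tsum_mul_right, ← ENNReal.ofReal_tsum_of_nonneg hgnn hgsum]
      exact ENNReal.mul_ne_top ENNReal.ofReal_ne_top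
        (by rw [Real.volume_Ioc]; exact ENNReal.ofReal_ne_top)
    have key : (∫ τ in Set.Ioc (-(Real.pi * r)) (Real.pi * r), ∑' k : Fin N → ℕ,
        ((∏ j, pois ((n:ℝ) * p j) (k j) : ℝ) : ℂ) * (((∑ j, h j (k j)) ^ s : ℝ) : ℂ) *
          Complex.exp (Complex.I * (τ:ℂ) *
            (((∑ j, ((k j:ℝ) - (n:ℝ)*p j)) : ℝ) : ℂ) / ((r:ℝ):ℂ)))
        = ∑' k : Fin N → ℕ, ∫ τ in Set.Ioc (-(Real.pi * r)) (Real.pi * r),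
            ((∏ j, pois ((n:ℝ) * p j) (k j) : ℝ) : ℂ) * (((∑ j, h j (k j)) ^ s : ℝ) : ℂ) *
              Complex.exp (Complex.I * (τ:ℂ) *
                (((∑ j, ((k j:ℝ) - (n:ℝ)*p j)) : ℝ) : ℂ) / ((r:ℝ):ℂ)) :=
      MeasureTheory.integral_tsum (fun k => (hcont k).aestronglyMeasurable) hfin
    have heval : ∀ k : Fin N → ℕ,
        (∫ τ in Set.Ioc (-(Real.pi * r)) (Real.pi * r),
          ((∏ j, pois ((n:ℝ) * p j) (k j) : ℝ) : ℂ) * (((∑ j, h j (k j)) ^ s : ℝ) : ℂ) *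
            Complex.exp (Complex.I * (τ:ℂ) *
              (((∑ j, ((k j:ℝ) - (n:ℝ)*p j)) : ℝ) : ℂ) / ((r:ℝ):ℂ)))
        = if (∑ j, k j) = n then ((2 * Real.pi * r : ℝ) : ℂ) *
            ((((∏ j, pois ((n:ℝ)*p j) (k j)) * (∑ j, h j (k j))^s) : ℝ) : ℂ) else 0 := by
      intro k
      rw [← intervalIntegral.integral_of_le hle]
      have harg : ∀ τ : ℝ, Complex.I * (τ:ℂ) *
          (((∑ j, ((k j:ℝ) - (n:ℝ)*p j)) : ℝ) : ℂ) / ((r:ℝ):ℂ)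
          = (Complex.I * (((∑ j, ((k j:ℝ) - (n:ℝ)*p j)) : ℝ) : ℂ) / ((r:ℝ):ℂ)) * (τ:ℂ) :=
        fun τ => by ring
      simp_rw [harg]
      rw [intervalIntegral.integral_const_mul]
      by_cases hkn : (∑ j, k j) = n
      · rw [if_pos hkn]
        have hD : (∑ j, ((k j:ℝ) - (n:ℝ)*p j)) = 0 := (hd0 k).mpr hkn
        rw [hD]
        simp only [Complex.ofReal_zero, mul_zero, zero_div, zero_mul, Complex.exp_zero]
        rw [intervalIntegral.integral_const, sub_neg_eq_add, Complex.real_smul, mul_one]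
        push_cast
        ring
      · rw [if_neg hkn]
        have hD : (∑ j, ((k j:ℝ) - (n:ℝ)*p j)) ≠ 0 := fun hc => hkn ((hd0 k).mp hc)
        have hc0 : Complex.I * (((∑ j, ((k j:ℝ) - (n:ℝ)*p j)) : ℝ) : ℂ) / ((r:ℝ):ℂ) ≠ 0 := by
          apply div_ne_zero (mul_ne_zero Complex.I_ne_zero (Complex.ofReal_ne_zero.mpr hD))
            (Complex.ofReal_ne_zero.mpr hr.ne')
        rw [integral_exp_mul_complex hc0]
        set m : ℤ := (∑ j, k j : ℕ) - (n : ℤ) with hm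
        have hDm : (∑ j, ((k j:ℝ) - (n:ℝ)*p j)) = (m : ℝ) := by
          rw [hd k, hm]; push_cast; ring
        have hb : Complex.I * (((∑ j, ((k j:ℝ) - (n:ℝ)*p j)) : ℝ) : ℂ) / ((r:ℝ):ℂ) *
            ((Real.pi * r : ℝ) : ℂ) = (m : ℂ) * ((Real.pi : ℝ) * Complex.I) := by
          rw [hDm]
          have : ((r:ℝ):ℂ) ≠ 0 := Complex.ofReal_ne_zero.mpr hr.ne'
          push_cast
          field_simp
        have ha : Complex.I * (((∑ j, ((k j:ℝ) - (n:ℝ)*p j)) : ℝ) : ℂ) / ((r:ℝ):ℂ) *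
            ((-(Real.pi * r) : ℝ) : ℂ) = ((-m : ℤ) : ℂ) * ((Real.pi : ℝ) * Complex.I) := by
          rw [hDm]
          have : ((r:ℝ):ℂ) ≠ 0 := Complex.ofReal_ne_zero.mpr hr.ne'
          push_cast
          field_simp
        rw [hb, ha, Complex.exp_int_mul, Complex.exp_int_mul, Complex.exp_pi_mul_I,
          zpow_neg, ← inv_zpow, inv_neg, inv_one, sub_self, zero_div, mul_zero]
    rw [intervalIntegral.integral_of_le hle, key, tsum_congr heval,
      tsum_eq_sum (s := Finset.Nat.antidiagonalTuple N n)
        (fun k hk => if_neg (fun hc => hk (Finset.Nat.mem_antidiagonalTuple.mpr hc)))]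
    have hite : ∀ k ∈ Finset.Nat.antidiagonalTuple N n,
        (if (∑ j, k j) = n then ((2 * Real.pi * r : ℝ) : ℂ) *
            ((((∏ j, pois ((n:ℝ)*p j) (k j)) * (∑ j, h j (k j))^s) : ℝ) : ℂ) else 0)
        = (((if (∑ j, k j) = n then (2 * Real.pi * r) *
            ((∏ j, pois ((n:ℝ)*p j) (k j)) * (∑ j, h j (k j))^s) else 0) : ℝ) : ℂ) := by
      intro k _
      split <;> push_cast <;> simp
    rw [Finset.sum_congr rfl hite, ← Complex.ofReal_sum, ← Complex.ofReal_mul,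
      Complex.ofReal_inj]
    unfold mExp RNval
    rw [Finset.mul_sum]
    refine Finset.sum_congr rfl fun k hk => ?_
    have hks : ∑ j, k j = n := Finset.Nat.mem_antidiagonalTuple.mp hk
    rw [if_pos hks, prod_pois_eq p hps k, hks, Real.exp_neg]
    have h1 : (Real.pi : ℝ) ≠ 0 := Real.pi_ne_zero
    have h2 : r ≠ 0 := hr.ne'
    have h3 : ((n:ℝ))^n ≠ 0 := pow_ne_zero n hn0.ne'
    have h4 : Real.exp (n:ℝ) ≠ 0 := Real.exp_ne_zero _
    field_simp
  · -- Part 2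
    rw [hts, Real.exp_neg]
    have h1 : (Real.pi : ℝ) ≠ 0 := Real.pi_ne_zero
    have h2 : r ≠ 0 := hr.ne'
    have h3 : ((n:ℝ))^n ≠ 0 := pow_ne_zero n hn0.ne'
    have h4 : Real.exp (n:ℝ) ≠ 0 := Real.exp_ne_zero _
    have h5 : ((Nat.factorial n : ℝ)) ≠ 0 := by positivity
    field_simp
end
end
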